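/- arXiv:2603.16146 — 5 statements merged into one kernel-verified Lean document; each statement's English description precedes it below -/
import Mathlib

section
/- In the targeted sPCE setup, for all integers L ≥ 1 and M ≥ 1, the targeted sequential Prior Contrastive Estimation objective is a lower bound on the targeted expected information gain: L̂(L,M) ≤ I. -/
/-!
By `-log t ≥ 1 - t`, the gap `I - L̂ = E[-log (p̂_M / g)] + E[-log (m / p̂_L)]` is at least
`2 - E[p̂_M / g] - E[m / p̂_L]`, so it suffices that both expectations are at most `1`.
Given `(θ_T⁰, h)`, each `f((θ_T⁰, η⁽ⁱ⁾), h)` has conditional mean `g(θ_T⁰, h)`, which settles the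
first. For the second, integrate over `θ⁽⁰⁾, …, θ⁽ᴸ⁾` before `h`: for fixed `h` one gets `m(h)`
times the mean of `f(θ⁽⁰⁾, h) / p̂_L` under i.i.d. prior samples, which is at most `1` because the
samples are exchangeable; what remains is `∫ m dλ ≤ 1`.
-/

open MeasureTheory ProbabilityTheory Finset
open scoped ENNReal

lemma Real.log_div_add_two_le {p q r s : ℝ} (hp : 0 < p) (hq : 0 < q) (hr : 0 < r)
    (hs : 0 < s) : Real.log (p / s) + 2 ≤ Real.log (q / r) + (p / q + r / s) := by
  have h₁ := Real.log_le_sub_one_of_pos (div_pos hp hq)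
  have h₂ := Real.log_le_sub_one_of_pos (div_pos hr hs)
  rw [Real.log_div hp.ne' hq.ne'] at h₁
  rw [Real.log_div hr.ne' hs.ne'] at h₂
  rw [Real.log_div hp.ne' hs.ne', Real.log_div hq.ne' hr.ne']
  linarith

lemma Measurable.integral_kernel_comp_fst {Θ Ξ H : Type*} [MeasurableSpace Θ]
    [MeasurableSpace Ξ] [MeasurableSpace H] (κ : Kernel Θ Ξ) [IsSFiniteKernel κ]
    {F : Θ × Ξ → H → ℝ} (hF : Measurable fun p : (Θ × Ξ) × H => F p.1 p.2) :
    Measurable fun p : Θ × H => ∫ b, F (p.1, b) p.2 ∂κ p.1 :=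
  (StronglyMeasurable.integral_kernel_prod_right (κ := κ.comap Prod.fst measurable_fst)
    (f := fun p b => F (p.1, b) p.2) (by fun_prop)).measurable

namespace MeasureTheory

variable {α : Type*} [MeasurableSpace α]

lemma lintegral_ofReal_eq_one_of_integral_eq_one {μ : Measure α} {G : α → ℝ}
    (hG0 : ∀ x, 0 ≤ G x) (hG : ∫ x, G x ∂μ = 1) : ∫⁻ x, ENNReal.ofReal (G x) ∂μ = 1 := by
  rw [← ofReal_integral_eq_lintegral_ofReal (Integrable.of_integral_ne_zero (by simp [hG]))
    (ae_of_all _ hG0), hG, ENNReal.ofReal_one]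

lemma ofReal_integral_le_lintegral_ofReal {μ : Measure α} {G : α → ℝ} (hG0 : 0 ≤ᵐ[μ] G) :
    ENNReal.ofReal (∫ a, G a ∂μ) ≤ ∫⁻ a, ENNReal.ofReal (G a) ∂μ := by
  by_cases hG : Integrable G μ
  · exact (ofReal_integral_eq_lintegral_ofReal hG hG0).le
  · simp [integral_undef hG]

lemma lintegral_ofReal_div_integral_le_one (κ : Measure α) {G : α → ℝ} (hG0 : ∀ a, 0 ≤ G a) :
    ∫⁻ a, ENNReal.ofReal (G a / ∫ b, G b ∂κ) ∂κ ≤ 1 := by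
  by_cases hG : Integrable G κ
  · rw [← ofReal_integral_eq_lintegral_ofReal (hG.div_const _)
      (ae_of_all _ fun a => div_nonneg (hG0 a) (integral_nonneg hG0)), integral_div]
    exact ENNReal.ofReal_le_one.2 (div_self_le_one _)
  · -- the Bochner integral is `0` by convention, and `G a / 0 = 0`
    simp [integral_undef hG]

lemma integrable_and_integral_le_of_lintegral_ofReal_le {μ : Measure α} {A : α → ℝ} {c : ℝ}
    (hc : 0 ≤ c) (hA : AEStronglyMeasurable A μ) (hA0 : 0 ≤ᵐ[μ] A)
    (hAc : ∫⁻ a, ENNReal.ofReal (A a) ∂μ ≤ ENNReal.ofReal c) :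
    Integrable A μ ∧ ∫ a, A a ∂μ ≤ c := by
  refine ⟨⟨hA, (hasFiniteIntegral_iff_ofReal hA0).2 (hAc.trans_lt ENNReal.ofReal_lt_top)⟩, ?_⟩
  rw [integral_eq_lintegral_of_nonneg_ae hA0 hA]
  exact ENNReal.toReal_le_of_le_ofReal hc hAc

lemma integral_log_div_le_integral_log_div {μ : Measure α} [IsProbabilityMeasure μ]
    {p q r s : α → ℝ} (hps : Integrable (fun a => Real.log (p a / s a)) μ)
    (hqr : Integrable (fun a => Real.log (q a / r a)) μ)
    (hpq : AEStronglyMeasurable (fun a => p a / q a) μ)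
    (hrs : AEStronglyMeasurable (fun a => r a / s a) μ)
    (hpos : ∀ᵐ a ∂μ, 0 < p a ∧ 0 < q a ∧ 0 < r a ∧ 0 < s a)
    (hpq_le : ∫⁻ a, ENNReal.ofReal (p a / q a) ∂μ ≤ 1)
    (hrs_le : ∫⁻ a, ENNReal.ofReal (r a / s a) ∂μ ≤ 1) :
    ∫ a, Real.log (p a / s a) ∂μ ≤ ∫ a, Real.log (q a / r a) ∂μ := by
  obtain ⟨hpq_int, hpq_int_le⟩ := integrable_and_integral_le_of_lintegral_ofReal_le zero_le_one
    hpq (by filter_upwards [hpos] with a ⟨hp, hq, _⟩ using (div_pos hp hq).le)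
    (by rwa [ENNReal.ofReal_one])
  obtain ⟨hrs_int, hrs_int_le⟩ := integrable_and_integral_le_of_lintegral_ofReal_le zero_le_one
    hrs (by filter_upwards [hpos] with a ⟨_, _, hr, hs⟩ using (div_pos hr hs).le)
    (by rwa [ENNReal.ofReal_one])
  have hsum : Integrable (fun a => p a / q a + r a / s a) μ := hpq_int.add hrs_int
  have hmono : ∫ a, (Real.log (p a / s a) + 2) ∂μ
      ≤ ∫ a, (Real.log (q a / r a) + (p a / q a + r a / s a)) ∂μ := by
    refine integral_mono_ae (hps.add (integrable_const 2)) (hqr.add hsum) ?_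
    filter_upwards [hpos] with a ⟨hp, hq, hr, hs⟩ using Real.log_div_add_two_le hp hq hr hs
  rw [integral_add hps (integrable_const 2), integral_add hqr hsum,
    integral_add hpq_int hrs_int, integral_const, probReal_univ, one_smul] at hmono
  linarith

lemma lintegral_pi_comp_eval {ι : Type*} [Fintype ι] (κ : Measure α) [IsProbabilityMeasure κ]
    (i : ι) {u : α → ℝ≥0∞} (hu : Measurable u) :
    ∫⁻ v, u (v i) ∂(Measure.pi fun _ : ι => κ) = ∫⁻ a, u a ∂κ :=
  (measurePreserving_eval (fun _ => κ) i).lintegral_comp hu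

lemma lintegral_pi_comp_perm {ι : Type*} [Fintype ι] (κ : Measure α) [SigmaFinite κ]
    (σ : Equiv.Perm ι) {W : (ι → α) → ℝ≥0∞} (hW : Measurable W) :
    ∫⁻ v, W (v ∘ σ) ∂(Measure.pi fun _ : ι => κ) = ∫⁻ v, W v ∂(Measure.pi fun _ : ι => κ) :=
  (measurePreserving_arrowCongr' (fun _ => κ) (fun _ => κ) σ.symm (MeasurableEquiv.refl α)
    fun _ => MeasurePreserving.id κ).lintegral_comp hW

lemma lintegral_lintegral_pi_eq_lintegral_pi_succ (κ : Measure α) [SigmaFinite κ] {n : ℕ}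
    {Φ : α → (Fin n → α) → ℝ≥0∞} (hΦ : Measurable (Function.uncurry Φ)) :
    ∫⁻ a, ∫⁻ v, Φ a v ∂(Measure.pi fun _ : Fin n => κ) ∂κ
      = ∫⁻ w, Φ (w 0) (Fin.tail w) ∂(Measure.pi fun _ : Fin (n + 1) => κ) :=
  (lintegral_prod _ hΦ.aemeasurable).symm.trans
    ((measurePreserving_piFinSuccAbove (fun _ => κ) 0).lintegral_comp hΦ).symm

lemma lintegral_pi_ofReal_mean {ι : Type*} [Fintype ι] [Nonempty ι] (κ : Measure α)
    [IsProbabilityMeasure κ] {G : α → ℝ} (hG : Measurable G) (hG0 : ∀ a, 0 ≤ G a) :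
    ∫⁻ v, ENNReal.ofReal ((Fintype.card ι : ℝ)⁻¹ * ∑ i, G (v i)) ∂(Measure.pi fun _ : ι => κ)
      = ∫⁻ a, ENNReal.ofReal (G a) ∂κ := by
  have hcard : (Fintype.card ι : ℝ≥0∞) ≠ 0 := by simp
  simp_rw [ENNReal.ofReal_mul (inv_nonneg.2 (Nat.cast_nonneg _)),
    ENNReal.ofReal_sum_of_nonneg fun i _ => hG0 _]
  rw [lintegral_const_mul _ (by fun_prop), lintegral_finsetSum _ (fun i _ => by fun_prop),
    sum_congr rfl fun i _ => lintegral_pi_comp_eval κ i (u := fun a => ENNReal.ofReal (G a))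
      (by fun_prop),
    sum_const, card_univ, nsmul_eq_mul, ← mul_assoc, ENNReal.ofReal_inv_of_pos (by positivity),
    ENNReal.ofReal_natCast, ENNReal.inv_mul_cancel hcard (by simp), one_mul]

lemma lintegral_pi_ofReal_mean_div_integral_le_one {ι : Type*} [Fintype ι] [Nonempty ι]
    (κ : Measure α) [IsProbabilityMeasure κ] {G : α → ℝ} (hG : Measurable G)
    (hG0 : ∀ a, 0 ≤ G a) :
    ∫⁻ v, ENNReal.ofReal (((Fintype.card ι : ℝ)⁻¹ * ∑ i, G (v i)) / ∫ a, G a ∂κ)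
      ∂(Measure.pi fun _ : ι => κ) ≤ 1 := by
  simp_rw [mul_div_assoc, sum_div]
  rw [lintegral_pi_ofReal_mean κ (hG.div_const _)
    fun a => div_nonneg (hG0 a) (integral_nonneg hG0)]
  exact lintegral_ofReal_div_integral_le_one κ hG0

/-- Exchangeability of i.i.d. coordinates: every `F (w j) / mean F(w)` has the same integral, and
these `n + 1` quotients sum to at most `n + 1`. -/
lemma lintegral_pi_ofReal_div_mean_le_one (κ : Measure α) [IsProbabilityMeasure κ] {n : ℕ}
    {F : α → ℝ} (hF : Measurable F) (hF0 : ∀ a, 0 ≤ F a) :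
    ∫⁻ w, ENNReal.ofReal (F (w 0) / ((n + 1 : ℝ)⁻¹ * ∑ k, F (w k)))
      ∂(Measure.pi fun _ : Fin (n + 1) => κ) ≤ 1 := by
  set T : Fin (n + 1) → (Fin (n + 1) → α) → ℝ≥0∞ :=
    fun j w => ENNReal.ofReal (F (w j) / ((n + 1 : ℝ)⁻¹ * ∑ k, F (w k))) with hT
  have hTm : ∀ j, Measurable (T j) := fun j => by fun_prop
  have hT_eq : ∀ j, ∫⁻ w, T j w ∂(Measure.pi fun _ => κ)
      = ∫⁻ w, T 0 w ∂(Measure.pi fun _ => κ) := by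
    intro j
    rw [← lintegral_pi_comp_perm κ (Equiv.swap 0 j) (hTm 0)]
    congr with w
    simp only [hT, Function.comp_apply, Equiv.swap_apply_left,
      Equiv.sum_comp (Equiv.swap 0 j) (fun k => F (w k))]
  have hsum_le : ∀ w : Fin (n + 1) → α, ∑ j, T j w ≤ n + 1 := by
    intro w
    have hS : 0 ≤ ∑ k, F (w k) := sum_nonneg fun k _ => hF0 _
    rw [hT, ← ENNReal.ofReal_sum_of_nonneg fun j _ => div_nonneg (hF0 _)
      (mul_nonneg (by positivity) hS), ← sum_div]
    have hle : (∑ k, F (w k)) / ((n + 1 : ℝ)⁻¹ * ∑ k, F (w k)) ≤ ((n + 1 : ℕ) : ℝ) := by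
      rcases hS.eq_or_lt with hS | hS
      · simp only [← hS, mul_zero, div_zero]
        positivity
      · rw [div_le_iff₀ (by positivity)]
        field_simp
        push_cast
        rfl
    exact_mod_cast (ENNReal.ofReal_le_ofReal hle).trans_eq (ENNReal.ofReal_natCast _)
  have hmul : ((n : ℝ≥0∞) + 1) * ∫⁻ w, T 0 w ∂(Measure.pi fun _ => κ) ≤ (n + 1) * 1 :=
    calc ((n : ℝ≥0∞) + 1) * ∫⁻ w, T 0 w ∂(Measure.pi fun _ => κ)
        = ∫⁻ w, ∑ j, T j w ∂(Measure.pi fun _ => κ) := by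
          rw [lintegral_finsetSum _ fun j _ => hTm j]
          simp [hT_eq]
      _ ≤ ∫⁻ _, (n + 1 : ℝ≥0∞) ∂(Measure.pi fun _ : Fin (n + 1) => κ) := lintegral_mono hsum_le
      _ = (n + 1) * 1 := by simp
  exact (ENNReal.mul_le_mul_iff_right (by simp) (by simp)).1 hmul

section Likelihood

variable {Θ H : Type*} [MeasurableSpace Θ] [MeasurableSpace H] {ρ : Measure Θ}
  [IsProbabilityMeasure ρ] {lam : Measure H} {f : Θ → H → ℝ}

lemma lintegral_lintegral_ofReal_mul_le_one
    (hf_one : ∀ θ, ∫⁻ x, ENNReal.ofReal (f θ x) ∂lam = 1) {Φ : Θ → H → ℝ≥0∞}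
    (hΦ : ∀ θ x, Φ θ x ≤ 1) :
    ∫⁻ θ, ∫⁻ x, ENNReal.ofReal (f θ x) * Φ θ x ∂lam ∂ρ ≤ 1 :=
  calc ∫⁻ θ, ∫⁻ x, ENNReal.ofReal (f θ x) * Φ θ x ∂lam ∂ρ
      ≤ ∫⁻ θ, ∫⁻ x, ENNReal.ofReal (f θ x) ∂lam ∂ρ :=
        lintegral_mono fun θ => lintegral_mono fun x => mul_le_of_le_one_right' (hΦ θ x)
    _ = 1 := by simp [hf_one]

/-- `E[m(h) / p̂_L] ≤ 1`, where `m x = ∫ f θ' x dρ(θ')`. -/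
lemma lintegral_lintegral_ofReal_mul_marginal_div_mean_le_one [SigmaFinite lam]
    (hf : Measurable fun p : Θ × H => f p.1 p.2) (hf0 : ∀ θ x, 0 ≤ f θ x)
    (hf_one : ∀ θ, ∫⁻ x, ENNReal.ofReal (f θ x) ∂lam = 1) (L : ℕ) :
    ∫⁻ θ, ∫⁻ x, ENNReal.ofReal (f θ x) *
        ∫⁻ ts, ENNReal.ofReal ((∫ θ', f θ' x ∂ρ) /
          ((L + 1 : ℝ)⁻¹ * (f θ x + ∑ ℓ, f (ts ℓ) x))) ∂(Measure.pi fun _ : Fin L => ρ)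
      ∂lam ∂ρ ≤ 1 := by
  set m : H → ℝ := fun x => ∫ θ', f θ' x ∂ρ
  have hm : Measurable m := hf.stronglyMeasurable.integral_prod_left'.measurable
  have hm0 : ∀ x, 0 ≤ m x := fun x => integral_nonneg (hf0 · x)
  have hexch : ∀ x, ∫⁻ θ, ∫⁻ ts, ENNReal.ofReal (f θ x /
      ((L + 1 : ℝ)⁻¹ * (f θ x + ∑ ℓ, f (ts ℓ) x))) ∂(Measure.pi fun _ : Fin L => ρ) ∂ρ ≤ 1 := by
    intro x
    rw [lintegral_lintegral_pi_eq_lintegral_pi_succ ρ (by fun_prop)]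
    simpa only [Fin.sum_univ_succ, Fin.tail] using
      lintegral_pi_ofReal_div_mean_le_one ρ (F := fun θ => f θ x) (by fun_prop) (hf0 · x)
  calc _ = ∫⁻ x, ENNReal.ofReal (m x) * ∫⁻ θ, ∫⁻ ts, ENNReal.ofReal (f θ x /
          ((L + 1 : ℝ)⁻¹ * (f θ x + ∑ ℓ, f (ts ℓ) x))) ∂(Measure.pi fun _ : Fin L => ρ) ∂ρ
          ∂lam := by
        rw [lintegral_lintegral_swap (Measurable.aemeasurable (by
          refine Measurable.mul (by fun_prop) (Measurable.lintegral_prod_right'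
            (f := fun p : (Θ × H) × (Fin L → Θ) => ENNReal.ofReal (m p.1.2 /
              ((L + 1 : ℝ)⁻¹ * (f p.1.1 p.1.2 + ∑ ℓ, f (p.2 ℓ) p.1.2)))) ?_)
          fun_prop))]
        refine lintegral_congr fun x => ?_
        rw [← lintegral_const_mul' _ _ ENNReal.ofReal_ne_top]
        refine lintegral_congr fun θ => ?_
        rw [← lintegral_const_mul' _ _ ENNReal.ofReal_ne_top,
          ← lintegral_const_mul' _ _ ENNReal.ofReal_ne_top]
        refine lintegral_congr fun ts => ?_
        rw [← ENNReal.ofReal_mul (hf0 θ x), ← ENNReal.ofReal_mul (hm0 x), mul_div_left_comm]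
    _ ≤ ∫⁻ x, ENNReal.ofReal (m x) ∂lam :=
        lintegral_mono fun x => mul_le_of_le_one_right' (hexch x)
    _ ≤ ∫⁻ x, ∫⁻ θ, ENNReal.ofReal (f θ x) ∂ρ ∂lam := 
        lintegral_mono fun x => ofReal_integral_le_lintegral_ofReal (ae_of_all _ (hf0 · x))
    _ = 1 := by
        rw [lintegral_lintegral_swap (by fun_prop)]
        simp [hf_one]

end Likelihood

end MeasureTheory

theorem targeted_sPCE_lower_bound_general
    {Ω ΘT ΘN H : Type*}
    [MeasurableSpace Ω] [MeasurableSpace ΘT] [MeasurableSpace ΘN] [MeasurableSpace H]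
    (P : Measure Ω) [IsProbabilityMeasure P]
    (μT : Measure ΘT) [IsProbabilityMeasure μT]
    (ν : Kernel ΘT ΘN) [IsMarkovKernel ν]
    (lam : Measure H) [SigmaFinite lam]
    (f : ΘT × ΘN → H → ℝ)
    (hf_meas : Measurable fun p : (ΘT × ΘN) × H => f p.1 p.2)
    (hf_nonneg : ∀ θ x, 0 ≤ f θ x)
    (hf_dens : ∀ θ, ∫ x, f θ x ∂lam = 1)
    (L M : ℕ) (hM : 1 ≤ M)
    (θ0 : Ω → ΘT × ΘN) (h : Ω → H)
    (θs : Ω → Fin L → ΘT × ΘN) (ηs : Ω → Fin M → ΘN)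
    (hθ0 : Measurable θ0) (hh : Measurable h) (hθs : Measurable θs) (hηs : Measurable ηs)
    -- the joint law of (θ⁽⁰⁾, h, θ⁽¹⁾,…,θ⁽ᴸ⁾, η⁽¹⁾,…,η⁽ᴹ⁾):
    (hlaw : ∀ φ : (ΘT × ΘN) × H × (Fin L → ΘT × ΘN) × (Fin M → ΘN) → ℝ≥0∞,
      Measurable φ →
      ∫⁻ ω, φ (θ0 ω, h ω, θs ω, ηs ω) ∂P
        = ∫⁻ θ, (∫⁻ x, ENNReal.ofReal (f θ x) *
            (∫⁻ ts, (∫⁻ es, φ (θ, x, ts, es)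
                ∂(Measure.pi fun _ : Fin M => ν θ.1))
              ∂(Measure.pi fun _ : Fin L => μT.compProd ν)) ∂lam)
          ∂(μT.compProd ν))
    -- the target-conditional marginal g and the full marginal m:
    (g : ΘT → H → ℝ) (hg : ∀ θT x, g θT x = ∫ η, f (θT, η) x ∂(ν θT))
    (mf : H → ℝ) (hmf : ∀ x, mf x = ∫ θ, f θ x ∂(μT.compProd ν))
    -- the estimators p̂_M and p̂_L:
    (pM : Ω → ℝ) (hpM : ∀ ω, pM ω = (M : ℝ)⁻¹ * ∑ i, f ((θ0 ω).1, ηs ω i) (h ω))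
    (pL : Ω → ℝ)
    (hpL : ∀ ω, pL ω = ((L : ℝ) + 1)⁻¹ * (f (θ0 ω) (h ω) + ∑ ℓ, f (θs ω ℓ) (h ω)))
    -- almost sure positivity of the likelihoods and marginals:
    (hpos : ∀ᵐ ω ∂P, 0 < f (θ0 ω) (h ω) ∧ (∀ ℓ, 0 < f (θs ω ℓ) (h ω)) ∧
      (∀ i, 0 < f ((θ0 ω).1, ηs ω i) (h ω)) ∧
      0 < g (θ0 ω).1 (h ω) ∧ 0 < mf (h ω))
    -- all expectations appearing in the statement are finite:
    (hint_L : Integrable (fun ω => Real.log (pM ω / pL ω)) P)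
    (hint_I : Integrable (fun ω => Real.log (g (θ0 ω).1 (h ω) / mf (h ω))) P) :
    ∫ ω, Real.log (pM ω / pL ω) ∂P
      ≤ ∫ ω, Real.log (g (θ0 ω).1 (h ω) / mf (h ω)) ∂P := by
  have : Nonempty (Fin M) := ⟨⟨0, hM⟩⟩
  have hg_meas : Measurable fun p : ΘT × H => g p.1 p.2 := by
    simpa only [hg] using Measurable.integral_kernel_comp_fst ν hf_meas
  have hmf_meas : Measurable mf :=
    (funext hmf).symm ▸ hf_meas.stronglyMeasurable.integral_prod_left'.measurable
  have hf_one : ∀ θ, ∫⁻ x, ENNReal.ofReal (f θ x) ∂lam = 1 := fun θ =>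
    lintegral_ofReal_eq_one_of_integral_eq_one (hf_nonneg θ) (hf_dens θ)
  have hpM_div_g : ∫⁻ ω, ENNReal.ofReal (pM ω / g (θ0 ω).1 (h ω)) ∂P ≤ 1 := by
    simp only [hpM]
    refine (hlaw (fun q => ENNReal.ofReal (((M : ℝ)⁻¹ * ∑ i, f (q.1.1, q.2.2.2 i) q.2.1) /
      g q.1.1 q.2.1)) (by fun_prop)).trans_le ?_
    simp only [lintegral_const, measure_univ, mul_one]
    refine lintegral_lintegral_ofReal_mul_le_one hf_one fun θ x => ?_
    simpa only [Fintype.card_fin, hg] using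
      lintegral_pi_ofReal_mean_div_integral_le_one (ι := Fin M) (ν θ.1)
        (G := fun η => f (θ.1, η) x) (by fun_prop) fun η => hf_nonneg (θ.1, η) x
  have hmf_div_pL : ∫⁻ ω, ENNReal.ofReal (mf (h ω) / pL ω) ∂P ≤ 1 := by
    simp only [hpL]
    refine (hlaw (fun q => ENNReal.ofReal (mf q.2.1 /
      (((L : ℝ) + 1)⁻¹ * (f q.1 q.2.1 + ∑ ℓ, f (q.2.2.1 ℓ) q.2.1)))) (by fun_prop)).trans_le ?_
    simpa only [lintegral_const, measure_univ, mul_one, hmf] using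
      lintegral_lintegral_ofReal_mul_marginal_div_mean_le_one hf_meas hf_nonneg hf_one L
  have hpos_est : ∀ᵐ ω ∂P, 0 < pM ω ∧ 0 < g (θ0 ω).1 (h ω) ∧ 0 < mf (h ω) ∧ 0 < pL ω := by
    filter_upwards [hpos] with ω ⟨hf0, _, hfη, hg0, hm0⟩
    rw [hpM, hpL]
    exact ⟨mul_pos (by positivity) (sum_pos (fun i _ => hfη i) univ_nonempty), hg0, hm0,
      mul_pos (by positivity) (add_pos_of_pos_of_nonneg hf0 (sum_nonneg fun ℓ _ => hf_nonneg _ _))⟩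
  exact integral_log_div_le_integral_log_div hint_L hint_I
    (Measurable.aestronglyMeasurable (by simp only [hpM]; fun_prop))
    (Measurable.aestronglyMeasurable (by simp only [hpL]; fun_prop)) hpos_est hpM_div_g hmf_div_pL

/-- **Targeted sPCE lower bound.**  In the targeted sPCE setup (prior `μT ⊗ₘ ν` on
`ΘT × ΘN`, likelihood density `f` w.r.t. a σ-finite measure `lam` on `H`, ground truth
`θ0`, history `h`, contrastive samples `θs`, nuisance samples `ηs`, with the joint law
characterized by `hlaw`), for all `L ≥ 1`, `M ≥ 1` the targeted sPCE objective
`E[log (p̂_M / p̂_L)]` is a lower bound on the targeted EIG `E[log (g(θT⁰,h)/m(h))]`. -/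
theorem targeted_sPCE_lower_bound
    {Ω ΘT ΘN H : Type*}
    [MeasurableSpace Ω] [MeasurableSpace ΘT] [MeasurableSpace ΘN] [MeasurableSpace H]
    (P : Measure Ω) [IsProbabilityMeasure P]
    (μT : Measure ΘT) [IsProbabilityMeasure μT]
    (ν : Kernel ΘT ΘN) [IsMarkovKernel ν]
    (lam : Measure H) [SigmaFinite lam]
    (f : ΘT × ΘN → H → ℝ)
    (hf_meas : Measurable fun p : (ΘT × ΘN) × H => f p.1 p.2)
    (hf_nonneg : ∀ θ x, 0 ≤ f θ x)
    (hf_dens : ∀ θ, ∫ x, f θ x ∂lam = 1)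
    (L M : ℕ) (hL : 1 ≤ L) (hM : 1 ≤ M)
    (θ0 : Ω → ΘT × ΘN) (h : Ω → H)
    (θs : Ω → Fin L → ΘT × ΘN) (ηs : Ω → Fin M → ΘN)
    (hθ0 : Measurable θ0) (hh : Measurable h) (hθs : Measurable θs) (hηs : Measurable ηs)
    -- the joint law of (θ⁽⁰⁾, h, θ⁽¹⁾,…,θ⁽ᴸ⁾, η⁽¹⁾,…,η⁽ᴹ⁾):
    (hlaw : ∀ φ : (ΘT × ΘN) × H × (Fin L → ΘT × ΘN) × (Fin M → ΘN) → ℝ≥0∞,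
      Measurable φ →
      ∫⁻ ω, φ (θ0 ω, h ω, θs ω, ηs ω) ∂P
        = ∫⁻ θ, (∫⁻ x, ENNReal.ofReal (f θ x) *
            (∫⁻ ts, (∫⁻ es, φ (θ, x, ts, es)
                ∂(Measure.pi fun _ : Fin M => ν θ.1))
              ∂(Measure.pi fun _ : Fin L => μT.compProd ν)) ∂lam)
          ∂(μT.compProd ν))
    -- the target-conditional marginal g and the full marginal m:
    (g : ΘT → H → ℝ) (hg : ∀ θT x, g θT x = ∫ η, f (θT, η) x ∂(ν θT))
    (mf : H → ℝ) (hmf : ∀ x, mf x = ∫ θ, f θ x ∂(μT.compProd ν))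
    -- the estimators p̂_M and p̂_L:
    (pM : Ω → ℝ) (hpM : ∀ ω, pM ω = (M : ℝ)⁻¹ * ∑ i, f ((θ0 ω).1, ηs ω i) (h ω))
    (pL : Ω → ℝ)
    (hpL : ∀ ω, pL ω = ((L : ℝ) + 1)⁻¹ * (f (θ0 ω) (h ω) + ∑ ℓ, f (θs ω ℓ) (h ω)))
    -- almost sure positivity of the likelihoods and marginals:
    (hpos : ∀ᵐ ω ∂P, 0 < f (θ0 ω) (h ω) ∧ (∀ ℓ, 0 < f (θs ω ℓ) (h ω)) ∧
      (∀ i, 0 < f ((θ0 ω).1, ηs ω i) (h ω)) ∧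
      0 < g (θ0 ω).1 (h ω) ∧ 0 < mf (h ω))
    -- all expectations appearing in the statement are finite:
    (hint_L : Integrable (fun ω => Real.log (pM ω / pL ω)) P)
    (hint_I : Integrable (fun ω => Real.log (g (θ0 ω).1 (h ω) / mf (h ω))) P) :
    ∫ ω, Real.log (pM ω / pL ω) ∂P
      ≤ ∫ ω, Real.log (g (θ0 ω).1 (h ω) / mf (h ω)) ∂P :=
  targeted_sPCE_lower_bound_general P μT ν lam f hf_meas hf_nonneg hf_dens L M hM θ0 h θs ηs hθ0 hh
    hθs hηs hlaw g hg mf hmf pM hpM pL hpL hpos hint_L hint_I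
end

section
/- In the targeted sPCE setup, the contrastive (denominator) gap is nonnegative: E[log p̂_L − log m(h)] ≥ 0. -/
/-!
Since `log y ≤ y - 1`, the gap `E[log p̂_L - log m(h)]` is at least `1 - E[m(h) / p̂_L]`, so it
suffices to show `E[m(h) / p̂_L] ≤ 1`. Integrating `h` against its density and exchanging the
`θ⁽⁰⁾`- and `h`-integrals gives `∫ m(h) (L + 1) E[f(θ⁽⁰⁾, h) / ∑ₗ f(θ⁽ˡ⁾, h)] dλ(h)`, where
`θ⁽⁰⁾, …, θ⁽ᴸ⁾` are i.i.d. from the prior. By exchangeability the `L + 1` self-normalised weights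
have the same expectation, and they sum to at most one, so each has expectation at most
`1 / (L + 1)`; what remains is `∫ m dλ = 1`.
-/
open MeasureTheory ProbabilityTheory
open scoped ENNReal

theorem integral_nonneg_of_lintegral_exp_neg_le_one {Ω : Type*} [MeasurableSpace Ω]
    {P : Measure Ω} [IsProbabilityMeasure P] {X : Ω → ℝ} (hX : Integrable X P)
    (hexp : ∫⁻ ω, ENNReal.ofReal (Real.exp (-X ω)) ∂P ≤ 1) : 0 ≤ ∫ ω, X ω ∂P := by
  have hexp_nonneg : ∀ ω, 0 ≤ Real.exp (-X ω) := fun ω => (Real.exp_pos _).le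
  have hexp_meas : AEStronglyMeasurable (fun ω => Real.exp (-X ω)) P :=
    Real.continuous_exp.comp_aestronglyMeasurable hX.aestronglyMeasurable.neg
  have hexp_int : Integrable (fun ω => Real.exp (-X ω)) P :=
    ⟨hexp_meas, (hasFiniteIntegral_iff_ofReal (ae_of_all _ hexp_nonneg)).2
      (hexp.trans_lt ENNReal.one_lt_top)⟩
  have hexp_le : ∫ ω, Real.exp (-X ω) ∂P ≤ 1 := by
    rw [integral_eq_lintegral_of_nonneg_ae (ae_of_all _ hexp_nonneg) hexp_meas]
    exact ENNReal.toReal_le_of_le_ofReal zero_le_one (by rwa [ENNReal.ofReal_one])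
  have hmono : ∫ ω, (1 - X ω) ∂P ≤ ∫ ω, Real.exp (-X ω) ∂P :=
    integral_mono ((integrable_const 1).sub hX) hexp_int
      fun ω => by linarith [Real.add_one_le_exp (-X ω)]
  rw [integral_sub (integrable_const 1) hX, integral_const, probReal_univ, one_smul] at hmono
  linarith

theorem lintegral_pi_ofReal_div_sum_le_inv_card {ι α : Type*} [Fintype ι] [MeasurableSpace α]
    (μ : Measure α) [IsProbabilityMeasure μ] {F : α → ℝ} (hF : Measurable F) (hF0 : 0 ≤ F)
    (i : ι) :
    ∫⁻ v, ENNReal.ofReal (F (v i) / ∑ j, F (v j)) ∂Measure.pi (fun _ => μ)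
      ≤ (Fintype.card ι : ℝ≥0∞)⁻¹ := by
  classical
  set π := Measure.pi (fun _ : ι => μ)
  set G : ι → (ι → α) → ℝ≥0∞ := fun k v => ENNReal.ofReal (F (v k) / ∑ j, F (v j))
  have hG : ∀ k, Measurable (G k) := fun k => by unfold G; fun_prop
  have hsymm : ∀ k, ∫⁻ v, G k v ∂π = ∫⁻ v, G i v ∂π := by
    intro k
    rw [← (measurePreserving_piCongrLeft (fun _ => μ) (Equiv.swap i k)).lintegral_comp (hG k)]
    refine lintegral_congr fun v => ?_
    simp [G, MeasurableEquiv.piCongrLeft, Equiv.piCongrLeft_apply_eq_cast,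
      Equiv.sum_comp (Equiv.swap i k) fun j => F (v j)]
  have hsum : ∀ v : ι → α, ∑ k, G k v ≤ 1 := fun v => by
    rw [← ENNReal.ofReal_sum_of_nonneg
      fun k _ => div_nonneg (hF0 _) (Finset.sum_nonneg fun j _ => hF0 _), ← Finset.sum_div]
    exact ENNReal.ofReal_le_one.2 (div_self_le_one _)
  rw [ENNReal.le_inv_iff_mul_le]
  calc (∫⁻ v, G i v ∂π) * Fintype.card ι = ∑ k, ∫⁻ v, G k v ∂π := by simp [hsymm, mul_comm]
    _ = ∫⁻ v, ∑ k, G k v ∂π := (lintegral_finsetSum _ fun k _ => hG k).symm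
    _ ≤ ∫⁻ _, 1 ∂π := lintegral_mono hsum
    _ = 1 := by simp

theorem lintegral_lintegral_pi_ofReal_div_add_sum_le_inv {α : Type*} [MeasurableSpace α]
    (μ : Measure α) [IsProbabilityMeasure μ] {F : α → ℝ} (hF : Measurable F) (hF0 : 0 ≤ F)
    (L : ℕ) :
    ∫⁻ a, ∫⁻ t, ENNReal.ofReal (F a / (F a + ∑ ℓ, F (t ℓ))) ∂Measure.pi (fun _ : Fin L => μ) ∂μ
      ≤ ((L : ℝ≥0∞) + 1)⁻¹ := by
  have hsplit := measurePreserving_piFinSuccAbove (fun _ : Fin (L + 1) => μ) 0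
  rw [lintegral_lintegral (by fun_prop), ← hsplit.lintegral_comp (by fun_prop)]
  convert lintegral_pi_ofReal_div_sum_le_inv_card μ hF hF0 (0 : Fin (L + 1)) using 1
  · simp [Fin.sum_univ_succ, MeasurableEquiv.piFinSuccAbove_apply, Fin.tail]
  · simp

theorem lintegral_marginal_div_contrastive_mean_le_one
    {Θ H : Type*} [MeasurableSpace Θ] [MeasurableSpace H]
    (μ : Measure Θ) [IsProbabilityMeasure μ] (lam : Measure H) [SFinite lam]
    {f : Θ → H → ℝ} (hf : Measurable fun p : Θ × H => f p.1 p.2) (hf0 : ∀ θ x, 0 ≤ f θ x)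
    (hdens : ∀ θ, ∫⁻ x, ENNReal.ofReal (f θ x) ∂lam ≤ 1) (L : ℕ) :
    ∫⁻ θ, ∫⁻ x, ENNReal.ofReal (f θ x) *
        ∫⁻ ts, ENNReal.ofReal ((∫ θ', f θ' x ∂μ) /
          (((L : ℝ) + 1)⁻¹ * (f θ x + ∑ ℓ, f (ts ℓ) x))) ∂Measure.pi (fun _ : Fin L => μ)
      ∂lam ∂μ ≤ 1 := by
  set m : H → ℝ := fun x => ∫ θ', f θ' x ∂μ
  set πL := Measure.pi (fun _ : Fin L => μ)
  set J : Θ → H → ℝ≥0∞ := fun θ x =>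
    ∫⁻ ts, ENNReal.ofReal (f θ x / (f θ x + ∑ ℓ, f (ts ℓ) x)) ∂πL
  have hm : Measurable m := hf.stronglyMeasurable.integral_prod_left'.measurable
  have hm0 : ∀ x, 0 ≤ m x := fun x => integral_nonneg fun θ => hf0 θ x
  have hJ : Measurable (Function.uncurry J) :=
    Measurable.lintegral_prod_right' (f := fun q : (Θ × H) × (Fin L → Θ) =>
      ENNReal.ofReal (f q.1.1 q.1.2 / (f q.1.1 q.1.2 + ∑ ℓ, f (q.2 ℓ) q.1.2))) (by fun_prop)
  have hratio : ∀ θ x, ENNReal.ofReal (f θ x) *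
      ∫⁻ ts, ENNReal.ofReal (m x / (((L : ℝ) + 1)⁻¹ * (f θ x + ∑ ℓ, f (ts ℓ) x))) ∂πL
        = ENNReal.ofReal (m x) * ((L + 1) * J θ x) := by
    intro θ x
    have hk : ((L : ℝ≥0∞) + 1) = ENNReal.ofReal ((L : ℝ) + 1) := by
      rw [ENNReal.ofReal_add (by positivity) zero_le_one]; simp
    simp only [J, hk]
    rw [← lintegral_const_mul' _ _ ENNReal.ofReal_ne_top,
      ← lintegral_const_mul' _ _ ENNReal.ofReal_ne_top,
      ← lintegral_const_mul' _ _ ENNReal.ofReal_ne_top]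
    refine lintegral_congr fun ts => ?_
    rw [← ENNReal.ofReal_mul (hf0 θ x), ← ENNReal.ofReal_mul (by positivity),
      ← ENNReal.ofReal_mul (hm0 x)]
    congr 1
    simp only [div_eq_mul_inv, mul_inv, inv_inv]
    ring
  have hJ_le : ∀ x, (L + 1) * ∫⁻ θ, J θ x ∂μ ≤ 1 := fun x => by
    rw [mul_comm, ← ENNReal.le_inv_iff_mul_le]
    exact lintegral_lintegral_pi_ofReal_div_add_sum_le_inv μ (by fun_prop) (fun θ => hf0 θ x) L
  have hmarg : ∀ x, ENNReal.ofReal (m x) ≤ ∫⁻ θ, ENNReal.ofReal (f θ x) ∂μ := fun x => by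
    change ENNReal.ofReal (∫ θ, f θ x ∂μ) ≤ _
    rw [integral_eq_lintegral_of_nonneg_ae (ae_of_all _ fun θ => hf0 θ x) (by fun_prop)]
    exact ENNReal.ofReal_toReal_le
  calc _ = ∫⁻ θ, ∫⁻ x, ENNReal.ofReal (m x) * ((L + 1) * J θ x) ∂lam ∂μ :=
        lintegral_congr fun θ => lintegral_congr fun x => hratio θ x
    _ = ∫⁻ x, ENNReal.ofReal (m x) * ((L + 1) * ∫⁻ θ, J θ x ∂μ) ∂lam := by
        rw [lintegral_lintegral_swap (by fun_prop)]
        refine lintegral_congr fun x => ?_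
        rw [lintegral_const_mul' _ _ ENNReal.ofReal_ne_top,
          lintegral_const_mul' _ _ (by simp)]
    _ ≤ ∫⁻ x, ENNReal.ofReal (m x) ∂lam :=
        lintegral_mono fun x => mul_le_of_le_one_right' (hJ_le x)
    _ ≤ ∫⁻ x, ∫⁻ θ, ENNReal.ofReal (f θ x) ∂μ ∂lam := lintegral_mono hmarg
    _ = ∫⁻ θ, ∫⁻ x, ENNReal.ofReal (f θ x) ∂lam ∂μ := lintegral_lintegral_swap (by fun_prop)
    _ ≤ ∫⁻ _, 1 ∂μ := lintegral_mono hdens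
    _ = 1 := by simp

theorem targeted_sPCE_contrastive_gap_nonneg_general
    {Ω ΘT ΘN H : Type*}
    [MeasurableSpace Ω] [MeasurableSpace ΘT] [MeasurableSpace ΘN] [MeasurableSpace H]
    (P : Measure Ω) [IsProbabilityMeasure P]
    (μT : Measure ΘT) [IsProbabilityMeasure μT]
    (ν : Kernel ΘT ΘN) [IsMarkovKernel ν]
    (lam : Measure H) [SigmaFinite lam]
    (f : ΘT × ΘN → H → ℝ)
    (hf_meas : Measurable fun p : (ΘT × ΘN) × H => f p.1 p.2)
    (hf_nonneg : ∀ θ x, 0 ≤ f θ x)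
    (hf_dens : ∀ θ, ∫ x, f θ x ∂lam = 1)
    (L M : ℕ)
    (θ0 : Ω → ΘT × ΘN) (h : Ω → H)
    (θs : Ω → Fin L → ΘT × ΘN) (ηs : Ω → Fin M → ΘN)
    -- the joint law of (θ⁽⁰⁾, h, θ⁽¹⁾,…,θ⁽ᴸ⁾, η⁽¹⁾,…,η⁽ᴹ⁾):
    (hlaw : ∀ φ : (ΘT × ΘN) × H × (Fin L → ΘT × ΘN) × (Fin M → ΘN) → ℝ≥0∞,
      Measurable φ →
      ∫⁻ ω, φ (θ0 ω, h ω, θs ω, ηs ω) ∂P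
        = ∫⁻ θ, (∫⁻ x, ENNReal.ofReal (f θ x) *
            (∫⁻ ts, (∫⁻ es, φ (θ, x, ts, es)
                ∂(Measure.pi fun _ : Fin M => ν θ.1))
              ∂(Measure.pi fun _ : Fin L => μT.compProd ν)) ∂lam)
          ∂(μT.compProd ν))
    -- the target-conditional marginal g and the full marginal m:
    (g : ΘT → H → ℝ)
    (mf : H → ℝ) (hmf : ∀ x, mf x = ∫ θ, f θ x ∂(μT.compProd ν))
    -- the estimators p̂_M and p̂_L:
    (pL : Ω → ℝ)
    (hpL : ∀ ω, pL ω = ((L : ℝ) + 1)⁻¹ * (f (θ0 ω) (h ω) + ∑ ℓ, f (θs ω ℓ) (h ω)))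
    -- almost sure positivity of the likelihoods and marginals:
    (hpos : ∀ᵐ ω ∂P, 0 < f (θ0 ω) (h ω) ∧ (∀ ℓ, 0 < f (θs ω ℓ) (h ω)) ∧
      (∀ i, 0 < f ((θ0 ω).1, ηs ω i) (h ω)) ∧
      0 < g (θ0 ω).1 (h ω) ∧ 0 < mf (h ω))
    -- the expectation appearing in the statement is finite:
    (hint_gap : Integrable (fun ω => Real.log (pL ω) - Real.log (mf (h ω))) P) :
    -- the contrastive (denominator) gap is nonnegative: E[log p̂_L − log m(h)] ≥ 0
    0 ≤ ∫ ω, (Real.log (pL ω) - Real.log (mf (h ω))) ∂P := by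
  have hdens : ∀ θ, ∫⁻ x, ENNReal.ofReal (f θ x) ∂lam ≤ 1 := fun θ => by
    rw [← ofReal_integral_eq_lintegral_ofReal
      (.of_integral_ne_zero (by simp [hf_dens])) (ae_of_all _ (hf_nonneg θ)), hf_dens,
      ENNReal.ofReal_one]
  have hmarg : Measurable fun x => ∫ θ, f θ x ∂(μT.compProd ν) :=
    hf_meas.stronglyMeasurable.integral_prod_left'.measurable
  refine integral_nonneg_of_lintegral_exp_neg_le_one hint_gap ?_
  calc _ = ∫⁻ ω, ENNReal.ofReal (mf (h ω) / pL ω) ∂P := by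
        refine lintegral_congr_ae (hpos.mono fun ω ⟨hf0, hfs, _, _, hm⟩ => ?_)
        have hp : 0 < pL ω := hpL ω ▸ mul_pos (by positivity)
          (add_pos_of_pos_of_nonneg hf0 (Finset.sum_nonneg fun ℓ _ => (hfs ℓ).le))
        simp only [neg_sub, Real.exp_sub, Real.exp_log hm, Real.exp_log hp]
    _ = _ := by
      simp only [hmf, hpL]
      exact hlaw (fun q => ENNReal.ofReal ((∫ θ, f θ q.2.1 ∂(μT.compProd ν)) /
          (((L : ℝ) + 1)⁻¹ * (f q.1 q.2.1 + ∑ ℓ, f (q.2.2.1 ℓ) q.2.1))))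
        (.ennreal_ofReal ((hmarg.comp (by fun_prop)).div (by fun_prop)))
    _ ≤ 1 := by
      -- the integrand does not depend on the nuisance samples `η`, which integrate out
      simpa using lintegral_marginal_div_contrastive_mean_le_one
        (μT.compProd ν) lam hf_meas hf_nonneg hdens L

theorem targeted_sPCE_contrastive_gap_nonneg
    {Ω ΘT ΘN H : Type*}
    [MeasurableSpace Ω] [MeasurableSpace ΘT] [MeasurableSpace ΘN] [MeasurableSpace H]
    (P : Measure Ω) [IsProbabilityMeasure P]
    (μT : Measure ΘT) [IsProbabilityMeasure μT]
    (ν : Kernel ΘT ΘN) [IsMarkovKernel ν]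
    (lam : Measure H) [SigmaFinite lam]
    (f : ΘT × ΘN → H → ℝ)
    (hf_meas : Measurable fun p : (ΘT × ΘN) × H => f p.1 p.2)
    (hf_nonneg : ∀ θ x, 0 ≤ f θ x)
    (hf_dens : ∀ θ, ∫ x, f θ x ∂lam = 1)
    (L M : ℕ) (hL : 1 ≤ L) (hM : 1 ≤ M)
    (θ0 : Ω → ΘT × ΘN) (h : Ω → H)
    (θs : Ω → Fin L → ΘT × ΘN) (ηs : Ω → Fin M → ΘN)
    (hθ0 : Measurable θ0) (hh : Measurable h) (hθs : Measurable θs) (hηs : Measurable ηs)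
    -- the joint law of (θ⁽⁰⁾, h, θ⁽¹⁾,…,θ⁽ᴸ⁾, η⁽¹⁾,…,η⁽ᴹ⁾):
    (hlaw : ∀ φ : (ΘT × ΘN) × H × (Fin L → ΘT × ΘN) × (Fin M → ΘN) → ℝ≥0∞,
      Measurable φ →
      ∫⁻ ω, φ (θ0 ω, h ω, θs ω, ηs ω) ∂P
        = ∫⁻ θ, (∫⁻ x, ENNReal.ofReal (f θ x) *
            (∫⁻ ts, (∫⁻ es, φ (θ, x, ts, es)
                ∂(Measure.pi fun _ : Fin M => ν θ.1))
              ∂(Measure.pi fun _ : Fin L => μT.compProd ν)) ∂lam)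
          ∂(μT.compProd ν))
    -- the target-conditional marginal g and the full marginal m:
    (g : ΘT → H → ℝ) (hg : ∀ θT x, g θT x = ∫ η, f (θT, η) x ∂(ν θT))
    (mf : H → ℝ) (hmf : ∀ x, mf x = ∫ θ, f θ x ∂(μT.compProd ν))
    -- the estimators p̂_M and p̂_L:
    (pM : Ω → ℝ) (hpM : ∀ ω, pM ω = (M : ℝ)⁻¹ * ∑ i, f ((θ0 ω).1, ηs ω i) (h ω))
    (pL : Ω → ℝ)
    (hpL : ∀ ω, pL ω = ((L : ℝ) + 1)⁻¹ * (f (θ0 ω) (h ω) + ∑ ℓ, f (θs ω ℓ) (h ω)))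
    -- almost sure positivity of the likelihoods and marginals:
    (hpos : ∀ᵐ ω ∂P, 0 < f (θ0 ω) (h ω) ∧ (∀ ℓ, 0 < f (θs ω ℓ) (h ω)) ∧
      (∀ i, 0 < f ((θ0 ω).1, ηs ω i) (h ω)) ∧
      0 < g (θ0 ω).1 (h ω) ∧ 0 < mf (h ω))
    -- the expectation appearing in the statement is finite:
    (hint_gap : Integrable (fun ω => Real.log (pL ω) - Real.log (mf (h ω))) P) :
    -- the contrastive (denominator) gap is nonnegative: E[log p̂_L − log m(h)] ≥ 0
    0 ≤ ∫ ω, (Real.log (pL ω) - Real.log (mf (h ω))) ∂P :=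
  targeted_sPCE_contrastive_gap_nonneg_general P μT ν lam f hf_meas hf_nonneg hf_dens L M θ0 h θs ηs
    hlaw g mf hmf pL hpL hpos hint_gap
end

section
/- In the targeted sPCE setup, the contrastive gap admits a Kullback–Leibler representation: for λ-almost every h with 0 < m(h) < ∞, let p̃_h be the probability measure on Θ^{L+1} whose density with respect to the product μ^{⊗(L+1)} at (ϑ^(0), …, ϑ^(L)) is [(1/(L+1)) Σ_{ℓ=0}^L f(ϑ^(ℓ), h)] / m(h). Then E[log p̂_L − log m(h)] = ∫_H KL(p̃_h ‖ μ^{⊗(L+1)}) m(h) dλ(h), where KL denotes Kullback–Leibler divergence; in particular the contrastive gap is nonnegative. -/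
/-!
Write `Y = (θ⁽⁰⁾, θ⁽¹⁾, …, θ⁽ᴸ⁾)`. Where everything is positive, `log p̂_L − log m(h)` is
`log p̃ₕ(Y)`, with `p̃ₓ(v) = (1/(L+1)) Σ_ℓ f(v_ℓ, x) / m(x)`. A test function of the form
`u(p̃ₓ(v))` is symmetric in the coordinates of `v`, so in the law of `(h, Y)` the tilt
`f(θ⁽⁰⁾, h)` may be replaced by its symmetrization `(1/(L+1)) Σ_ℓ f(θ⁽ˡ⁾, h) = m(h) p̃ₕ(Y)`:
against such functions `(h, Y)` has the law `m(x) dλ(x) ⊗ p̃ₓ`. Applying this to the positive and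
negative parts of `log`, then Fubini, turns the gap into `∫ m(x) ∫ log p̃ₓ dp̃ₓ dλ(x)`, i.e. into
`∫ KL(p̃ₓ ‖ μ^{⊗(L+1)}) m(x) dλ(x)`. Each `p̃ₓ` with `m(x) > 0` is a probability measure, so
Gibbs' inequality makes every integrand nonnegative.
-/

open MeasureTheory ProbabilityTheory
open scoped ENNReal

/-- The Kullback–Leibler divergence `KL(ρ ‖ σ) = ∫ log (dρ/dσ) dρ`. -/
noncomputable def KLdiv {X : Type*} [MeasurableSpace X] (ρ σ : Measure X) : ℝ :=
  ∫ v, Real.log ((ρ.rnDeriv σ) v).toReal ∂ρ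

section Pi

variable {α : Type*} [MeasurableSpace α] {n : ℕ}

@[fun_prop]
theorem Measurable.finCons {β : Type*} [MeasurableSpace β] {g : β → α} {gs : β → Fin n → α}
    (hg : Measurable g) (hgs : Measurable gs) :
    Measurable fun b => (Fin.cons (g b) (gs b) : Fin (n + 1) → α) :=
  measurable_pi_iff.2 fun j => Fin.cases hg (fun j => (measurable_pi_apply j).comp hgs) j

theorem lintegral_pi_succ_eq_lintegral_insertNth (μ : Measure α) [SigmaFinite μ]
    (i : Fin (n + 1)) {G : (Fin (n + 1) → α) → ℝ≥0∞} (hG : Measurable G) :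
    ∫⁻ v, G v ∂(Measure.pi fun _ => μ)
      = ∫⁻ θ, ∫⁻ ts, G (i.insertNth θ ts) ∂(Measure.pi fun _ : Fin n => μ) ∂μ := by
  let e := MeasurableEquiv.piFinSuccAbove (fun _ : Fin (n + 1) => α) i
  rw [← ((measurePreserving_piFinSuccAbove (fun _ => μ) i).symm e).lintegral_comp hG,
    lintegral_prod (fun p => G (e.symm p)) (hG.comp e.symm.measurable).aemeasurable]
  rfl

theorem lintegral_pi_sum_mul_eq (μ : Measure α) [SigmaFinite μ] {w : α → ℝ≥0∞}
    (hw : Measurable w) {G : (Fin (n + 1) → α) → ℝ≥0∞} (hG : Measurable G)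
    (hG_symm : ∀ (i : Fin (n + 1)) θ ts, G (i.insertNth θ ts) = G (Fin.cons θ ts)) :
    ∫⁻ v, (∑ i, w (v i)) * G v ∂(Measure.pi fun _ => μ)
      = (n + 1) * ∫⁻ θ, w θ * ∫⁻ ts, G (Fin.cons θ ts) ∂(Measure.pi fun _ : Fin n => μ) ∂μ := by
  have hterm : ∀ i : Fin (n + 1), ∫⁻ v, w (v i) * G v ∂(Measure.pi fun _ => μ)
      = ∫⁻ θ, w θ * ∫⁻ ts, G (Fin.cons θ ts) ∂(Measure.pi fun _ : Fin n => μ) ∂μ := by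
    intro i
    rw [lintegral_pi_succ_eq_lintegral_insertNth μ i (by fun_prop)]
    refine lintegral_congr fun θ => ?_
    simp only [Fin.insertNth_apply_same, hG_symm]
    exact lintegral_const_mul _ (hG.comp (measurable_const.finCons measurable_id))
  simp_rw [Finset.sum_mul]
  rw [lintegral_finsetSum _ fun i _ => by fun_prop]
  simp [hterm]

end Pi

theorem KLdiv_withDensity_ofReal {X : Type*} [MeasurableSpace X] (σ : Measure X) [SigmaFinite σ]
    {d : X → ℝ} (hd : Measurable d) (hd0 : ∀ v, 0 ≤ d v) :
    KLdiv (σ.withDensity fun v => ENNReal.ofReal (d v)) σ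
      = ∫ v, Real.log (d v) ∂(σ.withDensity fun v => ENNReal.ofReal (d v)) := by
  refine integral_congr_ae ?_
  filter_upwards [(withDensity_absolutelyContinuous σ _).ae_le
    (Measure.rnDeriv_withDensity σ hd.ennreal_ofReal)] with v hv
  rw [hv, ENNReal.toReal_ofReal (hd0 v)]

theorem KLdiv_nonneg {X : Type*} [MeasurableSpace X] {ρ σ : Measure X} [IsFiniteMeasure ρ]
    [IsFiniteMeasure σ] (hρσ : ρ ≪ σ) (h_univ : ρ Set.univ = σ Set.univ) : 0 ≤ KLdiv ρ σ := by
  change 0 ≤ ∫ v, llr ρ σ v ∂ρ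
  rw [← InformationTheory.toReal_klDiv_of_measure_eq hρσ h_univ]
  exact ENNReal.toReal_nonneg

section PosNegParts

variable {Ω Z : Type*} [MeasurableSpace Ω] [MeasurableSpace Z] {P : Measure Ω} {Q : Measure Z}
  {φ : Ω → ℝ} {ψ : Z → ℝ}

theorem integrable_of_lintegral_ofReal_eq (hφ : Integrable φ P) (hψ : AEStronglyMeasurable ψ Q)
    (hpos : ∫⁻ ω, ENNReal.ofReal (φ ω) ∂P = ∫⁻ z, ENNReal.ofReal (ψ z) ∂Q)
    (hneg : ∫⁻ ω, ENNReal.ofReal (-φ ω) ∂P = ∫⁻ z, ENNReal.ofReal (-ψ z) ∂Q) :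
    Integrable ψ Q := by
  have enorm_eq : ∀ t : ℝ, ‖t‖ₑ = ENNReal.ofReal t + ENNReal.ofReal (-t) := fun t => by
    rcases le_total 0 t with ht | ht
    · simp [Real.enorm_eq_ofReal ht, ENNReal.ofReal_of_nonpos (neg_nonpos.2 ht)]
    · simp [Real.enorm_eq_ofReal_abs, abs_of_nonpos ht, ENNReal.ofReal_of_nonpos ht]
  have hfin := hφ.2
  refine ⟨hψ, ?_⟩
  unfold HasFiniteIntegral at hfin ⊢
  simp only [enorm_eq] at hfin ⊢
  rwa [lintegral_add_left' hφ.1.aemeasurable.ennreal_ofReal, hpos, hneg,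
    ← lintegral_add_left' hψ.aemeasurable.ennreal_ofReal] at hfin

theorem integral_eq_of_lintegral_ofReal_eq (hφ : Integrable φ P) (hψ : AEStronglyMeasurable ψ Q)
    (hpos : ∫⁻ ω, ENNReal.ofReal (φ ω) ∂P = ∫⁻ z, ENNReal.ofReal (ψ z) ∂Q)
    (hneg : ∫⁻ ω, ENNReal.ofReal (-φ ω) ∂P = ∫⁻ z, ENNReal.ofReal (-ψ z) ∂Q) :
    ∫ ω, φ ω ∂P = ∫ z, ψ z ∂Q := by
  rw [integral_eq_lintegral_pos_part_sub_lintegral_neg_part hφ,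
    integral_eq_lintegral_pos_part_sub_lintegral_neg_part
      (integrable_of_lintegral_ofReal_eq hφ hψ hpos hneg), hpos, hneg]

end PosNegParts

noncomputable section

namespace SPCE

variable {Θ H : Type*} [MeasurableSpace Θ]

def marginal (μ : Measure Θ) (f : Θ → H → ℝ) (x : H) : ℝ :=
  ∫ θ, f θ x ∂μ

/-- The density of `p̃ₓ` with respect to `μ^{⊗(n+1)}`; it is `0` where `marginal μ f x = 0`. -/
def pooledDensity (μ : Measure Θ) (f : Θ → H → ℝ) {n : ℕ} (v : Fin (n + 1) → Θ) (x : H) : ℝ :=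
  (((n : ℝ) + 1)⁻¹ * ∑ ℓ, f (v ℓ) x) / marginal μ f x

variable {μ : Measure Θ} {f : Θ → H → ℝ} {n : ℕ}

theorem marginal_nonneg (hf0 : ∀ θ x, 0 ≤ f θ x) (x : H) : 0 ≤ marginal μ f x :=
  integral_nonneg fun θ => hf0 θ x

theorem pooledDensity_nonneg (hf0 : ∀ θ x, 0 ≤ f θ x) (v : Fin (n + 1) → Θ) (x : H) :
    0 ≤ pooledDensity μ f v x :=
  div_nonneg (mul_nonneg (by positivity) (Finset.sum_nonneg fun ℓ _ => hf0 _ _))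
    (marginal_nonneg hf0 x)

theorem pooledDensity_cons (θ : Θ) (ts : Fin n → Θ) (x : H) :
    pooledDensity μ f (Fin.cons θ ts) x
      = (((n : ℝ) + 1)⁻¹ * (f θ x + ∑ j, f (ts j) x)) / marginal μ f x := by
  simp only [pooledDensity, Fin.sum_univ_succ, Fin.cons_zero, Fin.cons_succ]

theorem pooledDensity_insertNth (i : Fin (n + 1)) (θ : Θ) (ts : Fin n → Θ) (x : H) :
    pooledDensity μ f (i.insertNth θ ts) x = pooledDensity μ f (Fin.cons θ ts) x := by
  rw [pooledDensity_cons, pooledDensity, Fin.sum_univ_succAbove _ i]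
  simp only [Fin.insertNth_apply_same, Fin.insertNth_apply_succAbove]

variable [MeasurableSpace H]

def pooledPosterior (μ : Measure Θ) [SigmaFinite μ] (f : Θ → H → ℝ) (n : ℕ) :
    Kernel H (Fin (n + 1) → Θ) :=
  Kernel.withDensity (Kernel.const H (Measure.pi fun _ => μ))
    fun x v => ENNReal.ofReal (pooledDensity μ f v x)

instance [SigmaFinite μ] : IsSFiniteKernel (pooledPosterior μ f n) :=
  Kernel.IsSFiniteKernel.withDensity _ fun _ _ => ENNReal.ofReal_ne_top

def pooledJoint (μ : Measure Θ) [SigmaFinite μ] (f : Θ → H → ℝ) (lam : Measure H) (n : ℕ) :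
    Measure (H × (Fin (n + 1) → Θ)) :=
  lam.withDensity (fun x => ENNReal.ofReal (marginal μ f x)) ⊗ₘ pooledPosterior μ f n

theorem measurable_marginal [SFinite μ] (hf : Measurable (Function.uncurry f)) :
    Measurable (marginal μ f) :=
  hf.stronglyMeasurable.integral_prod_left.measurable

theorem measurable_pooledDensity [SFinite μ] (hf : Measurable (Function.uncurry f)) :
    Measurable fun q : H × (Fin (n + 1) → Θ) => pooledDensity μ f q.2 q.1 := by
  have hf' : ∀ ℓ : Fin (n + 1), Measurable fun q : H × (Fin (n + 1) → Θ) => f (q.2 ℓ) q.1 :=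
    fun ℓ => hf.comp (f := fun q : H × (Fin (n + 1) → Θ) => (q.2 ℓ, q.1)) (by fun_prop)
  exact (measurable_const.mul (Finset.measurable_sum _ fun ℓ _ => hf' ℓ)).div
    ((measurable_marginal hf).comp measurable_fst)

theorem pooledPosterior_apply [SigmaFinite μ] (hf : Measurable (Function.uncurry f)) (x : H) :
    pooledPosterior μ f n x
      = (Measure.pi fun _ => μ).withDensity fun v => ENNReal.ofReal (pooledDensity μ f v x) := by
  rw [pooledPosterior, Kernel.withDensity_apply _
    (measurable_pooledDensity hf).ennreal_ofReal, Kernel.const_apply]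

theorem measurable_pooledDensity_left [SFinite μ] (hf : Measurable (Function.uncurry f))
    (x : H) : Measurable fun v : Fin (n + 1) → Θ => pooledDensity μ f v x :=
  (measurable_pooledDensity hf).comp (f := fun v => (x, v)) (by fun_prop)

theorem ofReal_marginal_mul_lintegral_pooledDensity_mul [SigmaFinite μ]
    (hf : Measurable (Function.uncurry f)) (hf0 : ∀ θ x, 0 ≤ f θ x) {x : H}
    (hx : 0 < marginal μ f x) {G : (Fin (n + 1) → Θ) → ℝ≥0∞} (hG : Measurable G)
    (hG_symm : ∀ (i : Fin (n + 1)) θ ts, G (i.insertNth θ ts) = G (Fin.cons θ ts)) :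
    ENNReal.ofReal (marginal μ f x)
        * ∫⁻ v, ENNReal.ofReal (pooledDensity μ f v x) * G v ∂(Measure.pi fun _ => μ)
      = ∫⁻ θ, ENNReal.ofReal (f θ x)
          * ∫⁻ ts, G (Fin.cons θ ts) ∂(Measure.pi fun _ : Fin n => μ) ∂μ := by
  have hfx : Measurable fun θ => ENNReal.ofReal (f θ x) :=
    (hf.comp (f := fun θ => (θ, x)) (by fun_prop)).ennreal_ofReal
  have hD := measurable_pooledDensity_left (μ := μ) (n := n) hf x
  have hpool : ∀ v : Fin (n + 1) → Θ,
      ENNReal.ofReal (marginal μ f x) * ENNReal.ofReal (pooledDensity μ f v x)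
        = (n + 1 : ℝ≥0∞)⁻¹ * ∑ i, ENNReal.ofReal (f (v i) x) := fun v => by
    rw [← ENNReal.ofReal_mul hx.le, pooledDensity, mul_div_cancel₀ _ hx.ne',
      ENNReal.ofReal_mul (by positivity), ENNReal.ofReal_sum_of_nonneg fun i _ => hf0 _ _,
      ENNReal.ofReal_inv_of_pos (by positivity)]
    norm_cast
  calc _ = ∫⁻ v, (n + 1 : ℝ≥0∞)⁻¹ * ((∑ i, ENNReal.ofReal (f (v i) x)) * G v)
        ∂(Measure.pi fun _ => μ) := by
        rw [← lintegral_const_mul _ (by fun_prop)]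
        congr with v
        rw [← mul_assoc, hpool, mul_assoc]
    _ = _ := by
        rw [lintegral_const_mul _ (by fun_prop), lintegral_pi_sum_mul_eq μ hfx hG hG_symm,
          ← mul_assoc, ENNReal.inv_mul_cancel (by simp) (by simp), one_mul]

theorem pooledPosterior_apply_univ [IsProbabilityMeasure μ] (hf : Measurable (Function.uncurry f))
    (hf0 : ∀ θ x, 0 ≤ f θ x) {x : H} (hx : 0 < marginal μ f x) :
    pooledPosterior μ f n x Set.univ = 1 := by
  have hint : Integrable (fun θ => f θ x) μ := by
    by_contra h
    exact hx.ne' (integral_undef h)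
  have hmass := ofReal_marginal_mul_lintegral_pooledDensity_mul (n := n) hf hf0 hx
    (G := fun _ => 1) measurable_const fun _ _ _ => rfl
  simp only [mul_one, lintegral_const, measure_univ] at hmass
  rw [← ofReal_integral_eq_lintegral_ofReal hint (ae_of_all _ fun θ => hf0 θ x)] at hmass
  rw [pooledPosterior_apply hf, withDensity_apply _ MeasurableSet.univ, Measure.restrict_univ]
  refine (ENNReal.mul_right_inj (by simpa using hx) ENNReal.ofReal_ne_top).1 ?_
  rw [hmass, mul_one, marginal]

theorem KLdiv_pooledPosterior_mul_marginal_nonneg [IsProbabilityMeasure μ]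
    (hf : Measurable (Function.uncurry f)) (hf0 : ∀ θ x, 0 ≤ f θ x) (x : H) :
    0 ≤ KLdiv (pooledPosterior μ f n x) (Measure.pi fun _ => μ) * marginal μ f x := by
  rcases (marginal_nonneg hf0 x).eq_or_lt with hx | hx
  · rw [← hx, mul_zero]
  have : IsFiniteMeasure (pooledPosterior μ f n x) :=
    ⟨by simp [pooledPosterior_apply_univ hf hf0 hx]⟩
  refine mul_nonneg (KLdiv_nonneg ?_ ?_) hx.le
  · rw [pooledPosterior_apply hf]
    exact withDensity_absolutelyContinuous _ _
  · rw [pooledPosterior_apply_univ hf hf0 hx, measure_univ]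

theorem lintegral_pooledJoint [SigmaFinite μ] (lam : Measure H) [SFinite lam]
    (hf : Measurable (Function.uncurry f)) (hf0 : ∀ θ x, 0 ≤ f θ x) {u : ℝ → ℝ≥0∞}
    (hu : Measurable u) (hu0 : u 0 = 0) :
    ∫⁻ q, u (pooledDensity μ f q.2 q.1) ∂pooledJoint μ f lam n
      = ∫⁻ x, ∫⁻ θ, ENNReal.ofReal (f θ x)
          * ∫⁻ ts, u (pooledDensity μ f (Fin.cons θ ts) x) ∂(Measure.pi fun _ : Fin n => μ)
          ∂μ ∂lam := by
  have huD : Measurable fun q : H × (Fin (n + 1) → Θ) => u (pooledDensity μ f q.2 q.1) :=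
    hu.comp (measurable_pooledDensity hf)
  rw [pooledJoint, Measure.lintegral_compProd huD, lintegral_withDensity_eq_lintegral_mul _
    (measurable_marginal hf).ennreal_ofReal huD.lintegral_kernel_prod_right']
  refine lintegral_congr fun x => ?_
  rcases (marginal_nonneg (μ := μ) hf0 x).eq_or_lt with hx | hx
  · simp [pooledDensity, ← hx, hu0]
  have huDx : Measurable fun v : Fin (n + 1) → Θ => u (pooledDensity μ f v x) :=
    hu.comp (measurable_pooledDensity_left hf x)
  rw [Pi.mul_apply, pooledPosterior_apply hf, lintegral_withDensity_eq_lintegral_mul _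
    (measurable_pooledDensity_left hf x).ennreal_ofReal huDx]
  exact ofReal_marginal_mul_lintegral_pooledDensity_mul hf hf0 hx huDx
    fun i θ ts => by rw [pooledDensity_insertNth]

section Law

variable {Ω : Type*} [MeasurableSpace Ω]

def IsJointLaw (P : Measure Ω) (μ : Measure Θ) (f : Θ → H → ℝ) (lam : Measure H)
    (θ0 : Ω → Θ) (h : Ω → H) (θs : Ω → Fin n → Θ) : Prop :=
  ∀ φ : Θ × H × (Fin n → Θ) → ℝ≥0∞, Measurable φ →
    ∫⁻ ω, φ (θ0 ω, h ω, θs ω) ∂P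
      = ∫⁻ θ, ∫⁻ x, ENNReal.ofReal (f θ x) * ∫⁻ ts, φ (θ, x, ts) ∂(Measure.pi fun _ => μ) ∂lam ∂μ

variable {P : Measure Ω} [SigmaFinite μ] {lam : Measure H} [SFinite lam] {θ0 : Ω → Θ} {h : Ω → H}
  {θs : Ω → Fin n → Θ}

theorem lintegral_comp_pooledDensity_of_law (hf : Measurable (Function.uncurry f))
    (hf0 : ∀ θ x, 0 ≤ f θ x)
    (hlaw : IsJointLaw P μ f lam θ0 h θs)
    {u : ℝ → ℝ≥0∞} (hu : Measurable u) (hu0 : u 0 = 0) :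
    ∫⁻ ω, u (pooledDensity μ f (Fin.cons (θ0 ω) (θs ω)) (h ω)) ∂P
      = ∫⁻ q, u (pooledDensity μ f q.2 q.1) ∂pooledJoint μ f lam n := by
  have hfx : Measurable fun p : H × Θ => ENNReal.ofReal (f p.2 p.1) :=
    (hf.comp (f := fun p : H × Θ => (p.2, p.1)) (by fun_prop)).ennreal_ofReal
  have huD : Measurable fun p : (H × Θ) × (Fin n → Θ) =>
      u (pooledDensity μ f (Fin.cons p.1.2 p.2) p.1.1) :=
    hu.comp ((measurable_pooledDensity hf).comp
      (f := fun p : (H × Θ) × (Fin n → Θ) => (p.1.1, (Fin.cons p.1.2 p.2 : Fin (n + 1) → Θ)))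
      (by fun_prop))
  rw [lintegral_pooledJoint lam hf hf0 hu hu0,
    lintegral_lintegral_swap (hfx.mul huD.lintegral_prod_right').aemeasurable]
  exact hlaw (fun p => u (pooledDensity μ f (Fin.cons p.1 p.2.2) p.2.1))
    (hu.comp ((measurable_pooledDensity hf).comp
      (f := fun p : Θ × H × (Fin n → Θ) => (p.2.1, (Fin.cons p.1 p.2.2 : Fin (n + 1) → Θ)))
      (by fun_prop)))

theorem integral_log_pooledDensity_of_law (hf : Measurable (Function.uncurry f))
    (hf0 : ∀ θ x, 0 ≤ f θ x)
    (hlaw : IsJointLaw P μ f lam θ0 h θs)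
    (hint : Integrable (fun ω => Real.log (pooledDensity μ f (Fin.cons (θ0 ω) (θs ω)) (h ω))) P) :
    ∫ ω, Real.log (pooledDensity μ f (Fin.cons (θ0 ω) (θs ω)) (h ω)) ∂P
      = ∫ x, KLdiv (pooledPosterior μ f n x) (Measure.pi fun _ => μ) * marginal μ f x ∂lam := by
  have hlogD : AEStronglyMeasurable
      (fun q : H × (Fin (n + 1) → Θ) => Real.log (pooledDensity μ f q.2 q.1))
      (pooledJoint μ f lam n) :=
    (Real.measurable_log.comp (measurable_pooledDensity hf)).aestronglyMeasurable
  have hpos := lintegral_comp_pooledDensity_of_law hf hf0 hlaw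
    (u := fun t => ENNReal.ofReal (Real.log t)) (by fun_prop) (by simp)
  have hneg := lintegral_comp_pooledDensity_of_law hf hf0 hlaw
    (u := fun t => ENNReal.ofReal (-Real.log t)) (by fun_prop) (by simp)
  rw [integral_eq_of_lintegral_ofReal_eq hint hlogD hpos hneg, pooledJoint,
    Measure.integral_compProd (integrable_of_lintegral_ofReal_eq hint hlogD hpos hneg),
    integral_withDensity_eq_integral_toReal_smul (measurable_marginal hf).ennreal_ofReal
      (ae_of_all _ fun _ => ENNReal.ofReal_lt_top)]
  refine integral_congr_ae (ae_of_all _ fun x => ?_)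
  dsimp only
  rw [smul_eq_mul, ENNReal.toReal_ofReal (marginal_nonneg hf0 x), mul_comm,
    pooledPosterior_apply hf, KLdiv_withDensity_ofReal _ (measurable_pooledDensity_left hf x)
      (pooledDensity_nonneg hf0 · x)]

end Law

end SPCE

end

theorem targeted_sPCE_contrastive_gap_KL_repr_general
    {Ω ΘT ΘN H : Type*}
    [MeasurableSpace Ω] [MeasurableSpace ΘT] [MeasurableSpace ΘN] [MeasurableSpace H]
    (P : Measure Ω)
    (μT : Measure ΘT) [IsProbabilityMeasure μT]
    (ν : Kernel ΘT ΘN) [IsMarkovKernel ν]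
    (lam : Measure H) [SigmaFinite lam]
    (f : ΘT × ΘN → H → ℝ)
    (hf_meas : Measurable fun p : (ΘT × ΘN) × H => f p.1 p.2)
    (hf_nonneg : ∀ θ x, 0 ≤ f θ x)
    (L M : ℕ)
    (θ0 : Ω → ΘT × ΘN) (h : Ω → H)
    (θs : Ω → Fin L → ΘT × ΘN) (ηs : Ω → Fin M → ΘN)
    -- the joint law of (θ⁽⁰⁾, h, θ⁽¹⁾,…,θ⁽ᴸ⁾, η⁽¹⁾,…,η⁽ᴹ⁾):
    (hlaw : ∀ φ : (ΘT × ΘN) × H × (Fin L → ΘT × ΘN) × (Fin M → ΘN) → ℝ≥0∞,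
      Measurable φ →
      ∫⁻ ω, φ (θ0 ω, h ω, θs ω, ηs ω) ∂P
        = ∫⁻ θ, (∫⁻ x, ENNReal.ofReal (f θ x) *
            (∫⁻ ts, (∫⁻ es, φ (θ, x, ts, es)
                ∂(Measure.pi fun _ : Fin M => ν θ.1))
              ∂(Measure.pi fun _ : Fin L => μT.compProd ν)) ∂lam)
          ∂(μT.compProd ν))
    -- the target-conditional marginal g and the full marginal m:
    (g : ΘT → H → ℝ)
    (mf : H → ℝ) (hmf : ∀ x, mf x = ∫ θ, f θ x ∂(μT.compProd ν))
    -- the estimators p̂_M and p̂_L: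
    (pL : Ω → ℝ)
    (hpL : ∀ ω, pL ω = ((L : ℝ) + 1)⁻¹ * (f (θ0 ω) (h ω) + ∑ ℓ, f (θs ω ℓ) (h ω)))
    -- almost sure positivity of the likelihoods and marginals:
    (hpos : ∀ᵐ ω ∂P, 0 < f (θ0 ω) (h ω) ∧ (∀ ℓ, 0 < f (θs ω ℓ) (h ω)) ∧
      (∀ i, 0 < f ((θ0 ω).1, ηs ω i) (h ω)) ∧
      0 < g (θ0 ω).1 (h ω) ∧ 0 < mf (h ω))
    -- the density of p̃ₓ with respect to μ^{⊗(L+1)}: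
    (dens : (Fin (L + 1) → ΘT × ΘN) → H → ℝ)
    (hdens : ∀ v x, dens v x = (((L : ℝ) + 1)⁻¹ * ∑ ℓ, f (v ℓ) x) / mf x)
    -- the measure p̃ₓ on Θ^{L+1} with that density:
    (ptilde : H → Measure (Fin (L + 1) → ΘT × ΘN))
    (hptilde : ∀ x, ptilde x
      = (Measure.pi fun _ : Fin (L + 1) => μT.compProd ν).withDensity
          (fun v => ENNReal.ofReal (dens v x)))
    -- the expectation appearing in the statement is finite:
    (hint_gap : Integrable (fun ω => Real.log (pL ω) - Real.log (mf (h ω))) P) :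
    -- KL representation of the contrastive gap, and its nonnegativity
    (∫ ω, (Real.log (pL ω) - Real.log (mf (h ω))) ∂P)
        = ∫ x, KLdiv (ptilde x) (Measure.pi fun _ : Fin (L + 1) => μT.compProd ν) * mf x ∂lam
      ∧ 0 ≤ ∫ ω, (Real.log (pL ω) - Real.log (mf (h ω))) ∂P := by
  set μ := μT.compProd ν
  obtain rfl : mf = SPCE.marginal μ f := funext hmf
  obtain rfl : dens = fun v x => SPCE.pooledDensity μ f v x := funext fun v => funext (hdens v)
  obtain rfl : ptilde = SPCE.pooledPosterior μ f L :=
    funext fun x => (hptilde x).trans (SPCE.pooledPosterior_apply hf_meas x).symm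
  have hgap : (fun ω => Real.log (pL ω) - Real.log (SPCE.marginal μ f (h ω)))
      =ᵐ[P] fun ω => Real.log (SPCE.pooledDensity μ f (Fin.cons (θ0 ω) (θs ω)) (h ω)) := by
    filter_upwards [hpos] with ω hω
    obtain ⟨hf_pos, -, -, -, hm_pos⟩ := hω
    have hpL_pos : 0 < pL ω := hpL ω ▸ mul_pos (by positivity)
      (add_pos_of_pos_of_nonneg hf_pos (Finset.sum_nonneg fun _ _ => hf_nonneg _ _))
    rw [SPCE.pooledDensity_cons, ← hpL ω, Real.log_div hpL_pos.ne' hm_pos.ne']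
  have hjoint : SPCE.IsJointLaw P μ f lam θ0 h θs := fun φ hφ => by
    simpa using hlaw (fun p => φ (p.1, p.2.1, p.2.2.1)) (hφ.comp (by fun_prop))
  rw [integral_congr_ae hgap, SPCE.integral_log_pooledDensity_of_law hf_meas hf_nonneg hjoint
    (hint_gap.congr hgap)]
  exact ⟨rfl, integral_nonneg (SPCE.KLdiv_pooledPosterior_mul_marginal_nonneg hf_meas hf_nonneg)⟩

theorem targeted_sPCE_contrastive_gap_KL_repr
    {Ω ΘT ΘN H : Type*}
    [MeasurableSpace Ω] [MeasurableSpace ΘT] [MeasurableSpace ΘN] [MeasurableSpace H]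
    (P : Measure Ω) [IsProbabilityMeasure P]
    (μT : Measure ΘT) [IsProbabilityMeasure μT]
    (ν : Kernel ΘT ΘN) [IsMarkovKernel ν]
    (lam : Measure H) [SigmaFinite lam]
    (f : ΘT × ΘN → H → ℝ)
    (hf_meas : Measurable fun p : (ΘT × ΘN) × H => f p.1 p.2)
    (hf_nonneg : ∀ θ x, 0 ≤ f θ x)
    (hf_dens : ∀ θ, ∫ x, f θ x ∂lam = 1)
    (L M : ℕ) (hL : 1 ≤ L) (hM : 1 ≤ M)
    (θ0 : Ω → ΘT × ΘN) (h : Ω → H)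
    (θs : Ω → Fin L → ΘT × ΘN) (ηs : Ω → Fin M → ΘN)
    (hθ0 : Measurable θ0) (hh : Measurable h) (hθs : Measurable θs) (hηs : Measurable ηs)
    -- the joint law of (θ⁽⁰⁾, h, θ⁽¹⁾,…,θ⁽ᴸ⁾, η⁽¹⁾,…,η⁽ᴹ⁾):
    (hlaw : ∀ φ : (ΘT × ΘN) × H × (Fin L → ΘT × ΘN) × (Fin M → ΘN) → ℝ≥0∞,
      Measurable φ →
      ∫⁻ ω, φ (θ0 ω, h ω, θs ω, ηs ω) ∂P
        = ∫⁻ θ, (∫⁻ x, ENNReal.ofReal (f θ x) *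
            (∫⁻ ts, (∫⁻ es, φ (θ, x, ts, es)
                ∂(Measure.pi fun _ : Fin M => ν θ.1))
              ∂(Measure.pi fun _ : Fin L => μT.compProd ν)) ∂lam)
          ∂(μT.compProd ν))
    -- the target-conditional marginal g and the full marginal m:
    (g : ΘT → H → ℝ) (hg : ∀ θT x, g θT x = ∫ η, f (θT, η) x ∂(ν θT))
    (mf : H → ℝ) (hmf : ∀ x, mf x = ∫ θ, f θ x ∂(μT.compProd ν))
    -- the estimators p̂_M and p̂_L:
    (pM : Ω → ℝ) (hpM : ∀ ω, pM ω = (M : ℝ)⁻¹ * ∑ i, f ((θ0 ω).1, ηs ω i) (h ω))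
    (pL : Ω → ℝ)
    (hpL : ∀ ω, pL ω = ((L : ℝ) + 1)⁻¹ * (f (θ0 ω) (h ω) + ∑ ℓ, f (θs ω ℓ) (h ω)))
    -- almost sure positivity of the likelihoods and marginals:
    (hpos : ∀ᵐ ω ∂P, 0 < f (θ0 ω) (h ω) ∧ (∀ ℓ, 0 < f (θs ω ℓ) (h ω)) ∧
      (∀ i, 0 < f ((θ0 ω).1, ηs ω i) (h ω)) ∧
      0 < g (θ0 ω).1 (h ω) ∧ 0 < mf (h ω))
    -- the density of p̃ₓ with respect to μ^{⊗(L+1)}: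
    (dens : (Fin (L + 1) → ΘT × ΘN) → H → ℝ)
    (hdens : ∀ v x, dens v x = (((L : ℝ) + 1)⁻¹ * ∑ ℓ, f (v ℓ) x) / mf x)
    -- the measure p̃ₓ on Θ^{L+1} with that density:
    (ptilde : H → Measure (Fin (L + 1) → ΘT × ΘN))
    (hptilde : ∀ x, ptilde x
      = (Measure.pi fun _ : Fin (L + 1) => μT.compProd ν).withDensity
          (fun v => ENNReal.ofReal (dens v x)))
    -- the expectation appearing in the statement is finite:
    (hint_gap : Integrable (fun ω => Real.log (pL ω) - Real.log (mf (h ω))) P) :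
    -- KL representation of the contrastive gap, and its nonnegativity
    (∫ ω, (Real.log (pL ω) - Real.log (mf (h ω))) ∂P)
        = ∫ x, KLdiv (ptilde x) (Measure.pi fun _ : Fin (L + 1) => μT.compProd ν) * mf x ∂lam
      ∧ 0 ≤ ∫ ω, (Real.log (pL ω) - Real.log (mf (h ω))) ∂P :=
  targeted_sPCE_contrastive_gap_KL_repr_general P μT ν lam f hf_meas hf_nonneg L M θ0 h θs ηs hlaw g
    mf hmf pL hpL hpos dens hdens ptilde hptilde hint_gap
end

section
/- Let μ > 0 and 0 < κ_1 ≤ κ_2 < ∞. Let X_1, …, X_M be i.i.d. real-valued random variables with mean μ and κ_1 μ ≤ X_i ≤ κ_2 μ almost surely. Then 0 ≤ log μ − E[log((1/M) Σ_{i=1}^M X_i)] ≤ Var(X_1) / (2 κ_1² μ² M). In particular, the Jensen gap of the logarithm of the sample mean is O(1/M). -/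
open MeasureTheory ProbabilityTheory

/-!
Jensen's inequality for the concave `log` gives `E[log X̄] ≤ log μ` for the sample mean `X̄`.
Conversely, on `[κ μ, ∞)` (which contains `μ`, as `κ μ ≤ E X̄ = μ`) the second derivative
`-1/x²` of `log` is at least `-1/(κ μ)²`, so `log x ≥ log μ + (x - μ)/μ - (x - μ)²/(2 κ² μ²)`.
Taking expectations at `x = X̄` kills the linear term and turns the quadratic one into
`Var X̄ / (2 κ² μ²)`, and `Var X̄ = Var X₁ / M` by independence.
-/

lemma isMinOn_of_hasDerivAt_of_sign {f f' : ℝ → ℝ} {S : Set ℝ} {c : ℝ} (hS : Convex ℝ S)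
    (hc : c ∈ S) (hf : ∀ x ∈ S, HasDerivAt f (f' x) x) (hsign : ∀ x ∈ S, 0 ≤ (x - c) * f' x) :
    IsMinOn f S c := by
  intro x hx
  have hsub : ∀ {y z}, y ∈ S → z ∈ S → Set.Icc y z ⊆ S := fun hy hz => hS.ordConnected.out hy hz
  have hcont : ∀ {y z}, y ∈ S → z ∈ S → ContinuousOn f (Set.Icc y z) := fun hy hz t ht =>
    (hf t (hsub hy hz ht)).continuousAt.continuousWithinAt
  have hdiff : ∀ {y z}, y ∈ S → z ∈ S → DifferentiableOn ℝ f (interior (Set.Icc y z)) :=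
    fun hy hz t ht =>
      (hf t (hsub hy hz (interior_subset ht))).differentiableAt.differentiableWithinAt
  rcases lt_or_ge x c with hxc | hcx
  · refine antitoneOn_of_deriv_nonpos (convex_Icc x c) (hcont hx hc) (hdiff hx hc)
      (fun t ht => ?_) ⟨le_rfl, hxc.le⟩ ⟨hxc.le, le_rfl⟩ hxc.le
    rw [interior_Icc] at ht
    have htS := hsub hx hc (Set.Ioo_subset_Icc_self ht)
    rw [(hf t htS).deriv]
    exact nonpos_of_mul_nonneg_right (hsign t htS) (sub_neg.2 ht.2)
  · refine monotoneOn_of_deriv_nonneg (convex_Icc c x) (hcont hc hx) (hdiff hc hx)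
      (fun t ht => ?_) ⟨le_rfl, hcx⟩ ⟨hcx, le_rfl⟩ hcx
    rw [interior_Icc] at ht
    have htS := hsub hc hx (Set.Ioo_subset_Icc_self ht)
    rw [(hf t htS).deriv]
    exact nonneg_of_mul_nonneg_right (hsign t htS) (sub_pos.2 ht.1)

namespace Real

lemma log_add_sub_div_sub_sq_div_le_log {a m x : ℝ} (ha : 0 < a) (ha₁ : a ≤ 1) (hm : 0 < m)
    (hx : a * m ≤ x) :
    log m + (x - m) / m - (x - m) ^ 2 / (2 * a ^ 2 * m ^ 2) ≤ log x := by
  set f : ℝ → ℝ := fun y => log y - (y - m) / m + (y - m) ^ 2 / (2 * a ^ 2 * m ^ 2)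
  have ham : 0 < a * m := mul_pos ha hm
  have hderiv : ∀ y ∈ Set.Ici (a * m),
      HasDerivAt f (y⁻¹ - 1 / m + (y - m) / (a ^ 2 * m ^ 2)) y := by
    intro y hy
    have hy0 : y ≠ 0 := (ham.trans_le hy).ne'
    refine (((hasDerivAt_log hy0).sub (((hasDerivAt_id' y).sub_const m).div_const m)).add
      ((((hasDerivAt_id' y).sub_const m).pow 2).div_const _)).congr_deriv ?_
    field_simp
    ring
  have hsign : ∀ y ∈ Set.Ici (a * m),
      0 ≤ (y - m) * (y⁻¹ - 1 / m + (y - m) / (a ^ 2 * m ^ 2)) := by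
    intro y (hy : a * m ≤ y)
    have hy0 : 0 < y := ham.trans_le hy
    have hfactor : (y - m) * (y⁻¹ - 1 / m + (y - m) / (a ^ 2 * m ^ 2)) =
        (y - m) ^ 2 * (y - a ^ 2 * m) / (y * a ^ 2 * m ^ 2) := by
      field_simp
      ring
    have : a ^ 2 * m ≤ y := by nlinarith [mul_le_mul_of_nonneg_right ha₁ ham.le]
    rw [hfactor]
    positivity
  have hmin : f m ≤ f x := isMinOn_of_hasDerivAt_of_sign (convex_Ici _)
    (mul_le_of_le_one_left hm.le ha₁) hderiv hsign (Set.mem_Ici.2 hx)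
  norm_num [f] at hmin
  linarith

end Real

open Real

section
variable {Ω : Type*} [MeasurableSpace Ω] {P : Measure Ω}

section
variable {Y : Ω → ℝ} {c : ℝ}

lemma integrable_log_of_le [IsFiniteMeasure P] (hY : Integrable Y P) (hc : 0 < c)
    (hcY : ∀ᵐ ω ∂P, c ≤ Y ω) :
    Integrable (fun ω => log (Y ω)) P := by
  refine ((integrable_const |log c|).add hY.abs).mono'
    (measurable_log.comp_aemeasurable hY.aemeasurable).aestronglyMeasurable ?_
  filter_upwards [hcY] with ω hω
  have hY0 : 0 < Y ω := hc.trans_le hω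
  rw [Real.norm_eq_abs, Pi.add_apply, abs_le]
  constructor
  · linarith [log_le_log hc hω, neg_abs_le (log c), abs_nonneg (Y ω)]
  · linarith [log_le_sub_one_of_pos hY0, le_abs_self (Y ω), abs_nonneg (log c)]

variable [IsProbabilityMeasure P]

lemma integral_log_le_log_integral (hY : Integrable Y P) (hc : 0 < c) (hcY : ∀ᵐ ω ∂P, c ≤ Y ω) :
    ∫ ω, log (Y ω) ∂P ≤ log (∫ ω, Y ω ∂P) :=
  (strictConcaveOn_log_Ioi.concaveOn.subset (fun _ hx => hc.trans_le hx)
    (convex_Ici c)).le_map_integral (continuousOn_log.mono fun _ hx => (hc.trans_le hx).ne')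
    isClosed_Ici hcY hY (integrable_log_of_le hY hc hcY)

lemma log_sub_integral_log_le_variance {m κ : ℝ} (hY : MemLp Y 2 P) (hmean : ∫ ω, Y ω ∂P = m)
    (hm : 0 < m) (hκ : 0 < κ) (hκY : ∀ᵐ ω ∂P, κ * m ≤ Y ω) :
    log m - ∫ ω, log (Y ω) ∂P ≤ variance Y P / (2 * κ ^ 2 * m ^ 2) := by
  have hYint : Integrable Y P := hY.integrable one_le_two
  have hκ₁ : κ ≤ 1 := by
    refine (mul_le_iff_le_one_left hm).1 ?_
    simpa [hmean] using integral_mono_ae (integrable_const (κ * m)) hYint hκY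
  have hdev : Integrable (fun ω => Y ω - m) P := hYint.sub (integrable_const m)
  have hsq : Integrable (fun ω => (Y ω - m) ^ 2) P := (hY.sub (memLp_const m)).integrable_sq
  have hlin : Integrable (fun ω => log m + (Y ω - m) / m) P :=
    (integrable_const _).add (hdev.div_const m)
  have htaylor : Integrable
      (fun ω => log m + (Y ω - m) / m - (Y ω - m) ^ 2 / (2 * κ ^ 2 * m ^ 2)) P :=
    hlin.sub (hsq.div_const _)
  have htaylor_integral : ∫ ω, (log m + (Y ω - m) / m - (Y ω - m) ^ 2 / (2 * κ ^ 2 * m ^ 2)) ∂P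
      = log m - variance Y P / (2 * κ ^ 2 * m ^ 2) := by
    rw [integral_sub hlin (hsq.div_const _),
      integral_add (integrable_const _) (hdev.div_const m), integral_div, integral_div,
      integral_sub hYint (integrable_const m), variance_eq_integral hY.aemeasurable, hmean]
    simp
  have hpt : ∀ᵐ ω ∂P,
      log m + (Y ω - m) / m - (Y ω - m) ^ 2 / (2 * κ ^ 2 * m ^ 2) ≤ log (Y ω) := by
    filter_upwards [hκY] with ω hω
    exact log_add_sub_div_sub_sq_div_le_log hκ hκ₁ hm hω
  have := integral_mono_ae htaylor (integrable_log_of_le hYint (mul_pos hκ hm) hκY) hpt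
  linarith

end

section
variable {ι : Type*} [Fintype ι] {X : ι → Ω → ℝ}

lemma ae_le_inv_card_mul_sum [Nonempty ι] {c : ℝ} (hX : ∀ i, ∀ᵐ ω ∂P, c ≤ X i ω) :
    ∀ᵐ ω ∂P, c ≤ (Fintype.card ι : ℝ)⁻¹ * ∑ i, X i ω := by
  filter_upwards [ae_all_iff.2 hX] with ω hω
  have hcard : (0 : ℝ) < Fintype.card ι := Nat.cast_pos.2 Fintype.card_pos
  rw [le_inv_mul_iff₀ hcard, ← nsmul_eq_mul]
  exact Finset.card_nsmul_le_sum Finset.univ _ c fun i _ => hω i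

lemma integral_inv_card_mul_sum [Nonempty ι] {m : ℝ} (hX : ∀ i, Integrable (X i) P)
    (hmean : ∀ i, ∫ ω, X i ω ∂P = m) :
    ∫ ω, (Fintype.card ι : ℝ)⁻¹ * ∑ i, X i ω ∂P = m := by
  rw [integral_const_mul, integral_finsetSum _ fun i _ => hX i]
  simp [hmean, Fintype.card_ne_zero]

lemma variance_inv_card_mul_sum {v : ℝ} (hX : ∀ i, MemLp (X i) 2 P)
    (hindep : Pairwise fun i j => X i ⟂ᵢ[P] X j) (hvar : ∀ i, variance (X i) P = v) :
    variance (fun ω => (Fintype.card ι : ℝ)⁻¹ * ∑ i, X i ω) P = v / Fintype.card ι := by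
  have hsum : variance (∑ i, X i) P = Fintype.card ι * v := by
    rw [IndepFun.variance_sum (fun i _ => hX i) fun i _ j _ hij => hindep hij]
    simp [hvar]
  have hfun : (fun ω => ∑ i, X i ω) = ∑ i, X i := by
    ext
    simp
  rw [variance_const_mul, hfun, hsum]
  rcases eq_or_ne (Fintype.card ι : ℝ) 0 with h | h
  · simp [h]
  · field_simp

end

end

theorem jensen_gap_log_sample_mean_general
    {Ω : Type*} [MeasurableSpace Ω] (P : Measure Ω) [IsProbabilityMeasure P]
    (M : ℕ) (hM : 0 < M)
    (X : Fin M → Ω → ℝ) (hmeas : ∀ i, Measurable (X i))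
    (hindep : iIndepFun X P)
    (hident : ∀ i j, IdentDistrib (X i) (X j) P P)
    (μm : ℝ) (hμm : 0 < μm) (hmean : ∀ i, ∫ ω, X i ω ∂P = μm)
    (κ1 κ2 : ℝ) (hκ1 : 0 < κ1)
    (hbdd : ∀ i, ∀ᵐ ω ∂P, κ1 * μm ≤ X i ω ∧ X i ω ≤ κ2 * μm) :
    0 ≤ Real.log μm - ∫ ω, Real.log ((M : ℝ)⁻¹ * ∑ i, X i ω) ∂P
      ∧ Real.log μm - ∫ ω, Real.log ((M : ℝ)⁻¹ * ∑ i, X i ω) ∂P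
        ≤ variance (X ⟨0, hM⟩) P / (2 * κ1 ^ 2 * μm ^ 2 * M) := by
  have : NeZero M := ⟨hM.ne'⟩
  have hX : ∀ i, MemLp (X i) 2 P := fun i =>
    memLp_of_bounded (hbdd i) (hmeas i).aestronglyMeasurable 2
  have hlow : ∀ᵐ ω ∂P, κ1 * μm ≤ (M : ℝ)⁻¹ * ∑ i, X i ω := by
    simpa using ae_le_inv_card_mul_sum fun i => (hbdd i).mono fun _ h => h.1
  have hmean' : ∫ ω, (M : ℝ)⁻¹ * ∑ i, X i ω ∂P = μm := by
    simpa using integral_inv_card_mul_sum (fun i => (hX i).integrable one_le_two) hmean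
  have hvar : variance (fun ω => (M : ℝ)⁻¹ * ∑ i, X i ω) P = variance (X ⟨0, hM⟩) P / M := by
    simpa using variance_inv_card_mul_sum hX (fun i j hij => hindep.indepFun hij)
      fun i => (hident i ⟨0, hM⟩).variance_eq
  have hmemLp : MemLp (fun ω => (M : ℝ)⁻¹ * ∑ i, X i ω) 2 P :=
    (memLp_finsetSum _ fun i _ => hX i).const_mul _
  refine ⟨sub_nonneg.2 ?_, ?_⟩
  · simpa [hmean'] using
      integral_log_le_log_integral (hmemLp.integrable one_le_two) (mul_pos hκ1 hμm) hlow
  · calc _ ≤ variance (fun ω => (M : ℝ)⁻¹ * ∑ i, X i ω) P / (2 * κ1 ^ 2 * μm ^ 2) :=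
          log_sub_integral_log_le_variance hmemLp hmean' hμm hκ1 hlow
      _ = _ := by rw [hvar, div_div, mul_comm (M : ℝ)]

/-- **O(1/M) Jensen gap for the log of a sample mean.**  Let `μm > 0`,
`0 < κ1 ≤ κ2 < ∞`, and let `X 1, …, X M` be i.i.d. real random variables with mean `μm`
and `κ1 * μm ≤ X i ≤ κ2 * μm` almost surely.  Then
`0 ≤ log μm − E[log ((1/M) ∑ i, X i)] ≤ Var(X 1) / (2 κ1² μm² M)`. -/
theorem jensen_gap_log_sample_mean
    {Ω : Type*} [MeasurableSpace Ω] (P : Measure Ω) [IsProbabilityMeasure P]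
    (M : ℕ) (hM : 0 < M)
    (X : Fin M → Ω → ℝ) (hmeas : ∀ i, Measurable (X i))
    (hindep : iIndepFun X P)
    (hident : ∀ i j, IdentDistrib (X i) (X j) P P)
    (μm : ℝ) (hμm : 0 < μm) (hmean : ∀ i, ∫ ω, X i ω ∂P = μm)
    (κ1 κ2 : ℝ) (hκ1 : 0 < κ1) (hκ12 : κ1 ≤ κ2)
    (hbdd : ∀ i, ∀ᵐ ω ∂P, κ1 * μm ≤ X i ω ∧ X i ω ≤ κ2 * μm) :
    0 ≤ Real.log μm - ∫ ω, Real.log ((M : ℝ)⁻¹ * ∑ i, X i ω) ∂P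
      ∧ Real.log μm - ∫ ω, Real.log ((M : ℝ)⁻¹ * ∑ i, X i ω) ∂P
        ≤ variance (X ⟨0, hM⟩) P / (2 * κ1 ^ 2 * μm ^ 2 * M) :=
  jensen_gap_log_sample_mean_general P M hM X hmeas hindep hident μm hμm hmean κ1 κ2 hκ1 hbdd
end

section
/- Let A be a finite nonempty type equipped with the discrete (top) σ-algebra, let (Y, 𝒴, p) be a probability space, and let f : A × Y → ℝ be such that y ↦ f(a, y) is measurable and integrable for every a ∈ A. Then ∫_Y max_{a ∈ A} f(a, y) dp(y) = ⨆ over measurable functions g : Y → A of ∫_Y f(g(y), y) dp(y), and this supremum is attained by some measurable g*. -/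
open MeasureTheory

/-- **Interchange of maximization and expectation.**  Let `A` be a finite nonempty type
with the discrete (top) σ-algebra, `(Y, 𝒴, p)` a probability space, and
`f : A × Y → ℝ` with `y ↦ f a y` measurable and integrable for every `a`.  Then
`∫ max_a f a y dp(y)` is the greatest value of `∫ f (g y) y dp(y)` over measurable
selections `g : Y → A`; in particular the supremum is attained by a measurable `g⋆`. -/
theorem integral_iSup_eq_max_over_measurable_selections
    {A Y : Type*} [Fintype A] [Nonempty A] [mA : MeasurableSpace A] (hA : mA = ⊤)
    [MeasurableSpace Y] (p : Measure Y) [IsProbabilityMeasure p]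
    (f : A → Y → ℝ) (hmeas : ∀ a, Measurable (f a)) (hint : ∀ a, Integrable (f a) p) :
    IsGreatest
      {r : ℝ | ∃ g : Y → A, Measurable g ∧ r = ∫ y, f (g y) y ∂p}
      (∫ y, ⨆ a, f a y ∂p) := by
  classical
  have hall : ∀ s : Set A, MeasurableSet s := fun s => by rw [hA]; trivial
  set M : Y → ℝ := fun y => ⨆ a, f a y with hMdef
  have hMa : ∀ y, ∃ a, f a y = M y := fun y => exists_eq_ciSup_of_finite
  have hbdd : ∀ y, BddAbove (Set.range fun a => f a y) :=
    fun y => (Set.finite_range _).bddAbove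
  have hle : ∀ a y, f a y ≤ M y := fun a y => le_ciSup (hbdd y) a
  have hMmeas : Measurable M := by
    have h1 : Measurable (fun y => Finset.univ.sup' Finset.univ_nonempty
        (fun a => f a y)) := by
      have := Finset.measurable_sup' (f := f) Finset.univ_nonempty
        (fun a _ => hmeas a)
      convert this using 1
      funext y
      simp [Finset.sup'_apply]
    convert h1 using 1
    funext y
    rw [Finset.sup'_univ_eq_ciSup]
  have hMint : Integrable M p := by
    refine Integrable.mono' (integrable_finset_sum Finset.univ
      (fun a _ => (hint a).abs)) hMmeas.aestronglyMeasurable ?_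
    filter_upwards with y
    obtain ⟨a, ha⟩ := hMa y
    calc ‖M y‖ = |f a y| := by rw [Real.norm_eq_abs, ha]
    _ ≤ ∑ b : A, |f b y| := Finset.single_le_sum (f := fun b => |f b y|) (fun b _ => abs_nonneg _)
        (Finset.mem_univ a)
  -- integrability of composed selections
  have hcomp : ∀ g : Y → A, Measurable g → Integrable (fun y => f (g y) y) p := by
    intro g hg
    have heq : (fun y => f (g y) y) =
        fun y => ∑ a : A, Set.indicator (g ⁻¹' {a}) (f a) y := by
      funext y
      rw [Finset.sum_eq_single (g y)]
      · simp [Set.indicator_of_mem, Set.mem_preimage]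
      · intro b _ hb
        exact Set.indicator_of_notMem (by simp [Ne.symm hb]) _
      · simp
    rw [heq]
    exact integrable_finset_sum _ fun a _ =>
      (hint a).indicator (hg (hall _))
  constructor
  · -- construct a measurable maximizer
    letI : LinearOrder A := LinearOrder.lift' (Fintype.equivFin A)
      (Fintype.equivFin A).injective
    set S : Y → Finset A := fun y => Finset.univ.filter (fun a => M y ≤ f a y)
      with hSdef
    have hSne : ∀ y, (S y).Nonempty := by
      intro y
      obtain ⟨a, ha⟩ := hMa y
      exact ⟨a, by simp [hSdef, ha.ge]⟩
    set g : Y → A := fun y => (S y).min' (hSne y) with hgdef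
    have hgval : ∀ y, f (g y) y = M y := by
      intro y
      have := Finset.min'_mem (S y) (hSne y)
      simp only [hSdef, Finset.mem_filter] at this
      exact le_antisymm (hle _ y) this.2
    have hgset : ∀ a, {y | g y = a} =
        {y | M y ≤ f a y} ∩ ⋂ b : A, {y | b < a → f b y < M y} := by
      intro a
      ext y
      simp only [Set.mem_setOf_eq, Set.mem_inter_iff, Set.mem_iInter]
      constructor
      · intro h
        have hmem : g y ∈ S y := Finset.min'_mem (S y) (hSne y)
        rw [h] at hmem
        simp only [hSdef, Finset.mem_filter] at hmem
        refine ⟨hmem.2, fun b hb => ?_⟩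
        by_contra hcon
        push_neg at hcon
        have hbS : b ∈ S y := by simp [hSdef, hcon]
        have hmle : g y ≤ b := Finset.min'_le (S y) b hbS
        rw [h] at hmle
        exact absurd hmle (not_le.mpr hb)
      · rintro ⟨h1, h2⟩
        have haS : a ∈ S y := by simp [hSdef, h1]
        have hle' : g y ≤ a := Finset.min'_le (S y) a haS
        rcases lt_or_eq_of_le hle' with hlt | heq
        · have hmem : g y ∈ S y := Finset.min'_mem (S y) (hSne y)
          simp only [hSdef, Finset.mem_filter] at hmem
          exact absurd hmem.2 (not_le.mpr (h2 _ hlt))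
        · exact heq
    have hg : Measurable g := by
      refine measurable_to_countable (fun y => ?_)
      have : g ⁻¹' {g y} = {z | g z = g y} := by ext z; simp
      rw [this, hgset]
      refine MeasurableSet.inter (measurableSet_le hMmeas (hmeas _)) ?_
      refine MeasurableSet.iInter (fun b => ?_)
      by_cases hb : b < g y
      · have : {z | b < g y → f b z < M z} = {z | f b z < M z} := by
          ext z; simp [hb]
        rw [this]
        exact measurableSet_lt (hmeas _) hMmeas
      · have : {z | b < g y → f b z < M z} = Set.univ := by
          ext z; simp [hb]
        rw [this]
        exact MeasurableSet.univ
    exact ⟨g, hg, by rw [integral_congr_ae (Filter.Eventually.of_forall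
      (fun y => (hgval y).symm))]⟩
  · rintro r ⟨g, hg, rfl⟩
    exact integral_mono (hcomp g hg) hMint (fun y => hle (g y) y)
end
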